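/- arXiv:1606.09541 — 5 statements merged into one kernel-verified Lean document; each statement's English description precedes it below -/
import Mathlib

section
/- Let d ≥ 1, r₀ ∈ ℕ and κ ∈ (0,1). For every ρ > 0 there exist δ > 0, ζ = ζ(δ) > 0, M > 0 and p₀ ∈ (0,1) such that for every p ∈ (p₀, 1] and every u ∈ ℝ^d with |u| ≤ δ one has ‖K_{κ,p,u}‖_ζ ≤ ρ and Σ_{i=1}^d ‖∂_{u_i} K_{κ,p,u}‖_ζ + Σ_{i,j=1}^d ‖∂²_{u_i u_j} K_{κ,p,u}‖_ζ + Σ_{i,j,k=1}^d ‖∂³_{u_i u_j u_k} K_{κ,p,u}‖_ζ ≤ M. -/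
open scoped BigOperators ENNReal

noncomputable section

/-- `ℝ^d` with the Euclidean norm. -/
abbrev Euc (d : ℕ) : Type := EuclideanSpace ℝ (Fin d)

/-- Partial derivative in the `i`-th coordinate direction. -/
def pder {d : ℕ} (i : Fin d) (f : Euc d → ℝ) : Euc d → ℝ := fun z =>
  fderiv ℝ f z (EuclideanSpace.single i 1)

/-- Iterated partial derivative `∂^α` for a multi-index `α`. -/
def pderMulti {d : ℕ} (α : Fin d → ℕ) (f : Euc d → ℝ) : Euc d → ℝ :=
  (List.finRange d).foldr (fun i g => (pder i)^[α i] g) f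

/-- Multi-indices of degree at most `r₀` (entries bounded by `r₀`). -/
def mIdx (d r₀ : ℕ) : Finset (Fin d → Fin (r₀ + 1)) :=
  Finset.univ.filter fun α => ∑ i, (α i : ℕ) ≤ r₀

/-- The weighted sum `Σ_{|α| ≤ r₀} ζ^{|α|} |∂^α K(z)| e^{−ζ^{−2}|z|²}`. -/
def wfun (d r₀ : ℕ) (ζ : ℝ) (K : Euc d → ℝ) (z : Euc d) : ℝ :=
  ∑ α ∈ mIdx d r₀,
    ζ ^ (∑ i, (α i : ℕ)) * |pderMulti (fun i => (α i : ℕ)) K z| *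
      Real.exp (-(ζ ^ 2)⁻¹ * ‖z‖ ^ 2)

/-- The norm `‖K‖_ζ` of the space `E(d, ζ, r₀)`, as an extended nonnegative real. -/
def zNorm (d r₀ : ℕ) (ζ : ℝ) (K : Euc d → ℝ) : ℝ≥0∞ :=
  ⨆ z : Euc d, ENNReal.ofReal (wfun d r₀ ζ K z)

/-- The Mayer function `K_{κ,p,u}` of the Biskup–Kotecký double-Gaussian potential. -/
def KBK (d : ℕ) (κ p : ℝ) (u : Euc d) : Euc d → ℝ := fun z =>
  (∏ i, (p + (1 - p) * Real.exp (1 / 2 * (1 - κ) * (z i - u i) ^ 2))) - 1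

/-- First partial derivative `∂_{uᵢ} K_{κ,p,u}` (pointwise in `z`). -/
def KBKd1 (d : ℕ) (κ p : ℝ) (i : Fin d) (u : Euc d) : Euc d → ℝ := fun z =>
  fderiv ℝ (fun v : Euc d => KBK d κ p v z) u (EuclideanSpace.single i 1)

/-- Second partial derivative `∂²_{uᵢuⱼ} K_{κ,p,u}` (pointwise in `z`). -/
def KBKd2 (d : ℕ) (κ p : ℝ) (i j : Fin d) (u : Euc d) : Euc d → ℝ := fun z =>
  fderiv ℝ (fun v : Euc d => KBKd1 d κ p j v z) u (EuclideanSpace.single i 1)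

/-- Third partial derivative `∂³_{uᵢuⱼu_k} K_{κ,p,u}` (pointwise in `z`). -/
def KBKd3 (d : ℕ) (κ p : ℝ) (i j k : Fin d) (u : Euc d) : Euc d → ℝ := fun z =>
  fderiv ℝ (fun v : Euc d => KBKd2 d κ p j k v z) u (EuclideanSpace.single i 1)

/-! With `δ = ζ = 1` the weight is `exp (-‖z‖²)`. The Mayer function and all its `z`- and
`u`-derivatives are, up to sign and the constant `-1`, separable products
`∏ i, g_{m i} (z i - u i)`, where `g_n` is the `n`-th derivative of
`g t = p + (1 - p) exp (c t²)`, `c = (1 - κ) / 2`: differentiating only raises the indices `m`.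
For `n ≥ 1`, `g_n t = (1 - p) P_n(t) exp (c t²)` with a polynomial `P_n = O(exp (κ t² / 4))`, so
every product with `m ≠ 0`, and also `∏ g_0 - 1`, is `O((1 - p) exp ((c + κ / 4) ‖z - u‖²))`.
As `c + κ / 4 ≤ 1 / 2` and `‖u‖ ≤ 1`, the weight absorbs this growth, and all the norms are
`O(1 - p)`. -/

open Polynomial Real Nat

-- `(d/dt)ⁿ exp (c t²) = (gaussPoly c n).eval t * exp (c t²)`
def gaussPoly (c : ℝ) : ℕ → ℝ[X]
  | 0 => 1
  | n + 1 => derivative (gaussPoly c n) + C (2 * c) * X * gaussPoly c n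

def mayerFactorDeriv (c p : ℝ) : ℕ → ℝ → ℝ
  | 0, t => p + (1 - p) * exp (c * t ^ 2)
  | n + 1, t => (1 - p) * ((gaussPoly c (n + 1)).eval t * exp (c * t ^ 2))

lemma hasDerivAt_mayerFactorDeriv (c p : ℝ) (n : ℕ) (t : ℝ) :
    HasDerivAt (mayerFactorDeriv c p n) (mayerFactorDeriv c p (n + 1) t) t := by
  have hexp : HasDerivAt (fun t => exp (c * t ^ 2)) (2 * c * t * exp (c * t ^ 2)) t := by
    convert ((hasDerivAt_pow 2 t).const_mul c).exp using 1
    ring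
  cases n with
  | zero =>
    refine ((hexp.const_mul (1 - p)).const_add p).congr_deriv ?_
    simp [mayerFactorDeriv, gaussPoly]
  | succ n =>
    refine ((((gaussPoly c (n + 1)).hasDerivAt t).mul hexp).const_mul (1 - p)).congr_deriv ?_
    simp only [mayerFactorDeriv, gaussPoly, eval_add, eval_mul, eval_C, eval_X]
    ring

lemma abs_pow_le_mul_exp_sq {ε : ℝ} (hε : 0 < ε) (n : ℕ) (t : ℝ) :
    |t| ^ n ≤ (1 + n ! / ε ^ n) * exp (ε * t ^ 2) := by
  have hsq : (t ^ 2) ^ n ≤ n ! / ε ^ n * exp (ε * t ^ 2) := by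
    have := Real.pow_div_factorial_le_exp (ε * t ^ 2) (by positivity) n
    rw [mul_pow, div_le_iff₀ (by positivity)] at this
    rw [div_mul_eq_mul_div, le_div_iff₀ (by positivity)]
    linarith
  have hpow : |t| ^ n ≤ 1 + (t ^ 2) ^ n := by
    rcases le_total |t| 1 with h | h
    · nlinarith [pow_le_one₀ (n := n) (abs_nonneg t) h, pow_nonneg (sq_nonneg t) n]
    · have : |t| ≤ t ^ 2 := by nlinarith [sq_abs t]
      nlinarith [pow_le_pow_left₀ (abs_nonneg t) this n]
  nlinarith [one_le_exp (by positivity : 0 ≤ ε * t ^ 2)]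

lemma Polynomial.exists_abs_eval_le_mul_exp_sq (P : ℝ[X]) {ε : ℝ} (hε : 0 < ε) :
    ∃ C, ∀ t, |P.eval t| ≤ C * exp (ε * t ^ 2) := by
  induction P using Polynomial.induction_on' with
  | add P Q hP hQ =>
    obtain ⟨C, hC⟩ := hP
    obtain ⟨C', hC'⟩ := hQ
    exact ⟨C + C', fun t => by
      rw [eval_add, add_mul]; exact (abs_add_le _ _).trans (add_le_add (hC t) (hC' t))⟩
  | monomial n a =>
    refine ⟨|a| * (1 + n ! / ε ^ n), fun t => ?_⟩
    rw [eval_monomial, abs_mul, abs_pow, mul_assoc]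
    exact mul_le_mul_of_nonneg_left (abs_pow_le_mul_exp_sq hε n t) (abs_nonneg a)

lemma exists_abs_gaussPoly_le (c : ℝ) {ε : ℝ} (hε : 0 < ε) (N : ℕ) :
    ∃ D, 1 ≤ D ∧ ∀ n ≤ N, ∀ t, |(gaussPoly c n).eval t| ≤ D * exp (ε * t ^ 2) := by
  choose C hC using fun n => (gaussPoly c n).exists_abs_eval_le_mul_exp_sq hε
  refine ⟨1 + ∑ n ∈ Finset.range (N + 1), |C n|, ?_, fun n hn t => (hC n t).trans ?_⟩
  · have := Finset.sum_nonneg fun n (_ : n ∈ Finset.range (N + 1)) => abs_nonneg (C n)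
    linarith
  · have := Finset.single_le_sum (fun m _ => abs_nonneg (C m))
      (Finset.mem_range.mpr (Nat.lt_succ_of_le hn))
    gcongr
    linarith [le_abs_self (C n)]

def sepProd {d : ℕ} (f : ℕ → ℝ → ℝ) (m : Fin d → ℕ) (w : Euc d) : ℝ := ∏ i, f (m i) (w i)

section SepProd

variable {d : ℕ} {f : ℕ → ℝ → ℝ}

lemma hasFDerivAt_sepProd (hf : ∀ n t, HasDerivAt (f n) (f (n + 1) t) t) (m : Fin d → ℕ)
    (w : Euc d) :
    HasFDerivAt (sepProd f m)
      (∑ i, (∏ j ∈ Finset.univ.erase i, f (m j) (w j)) •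
        f (m i + 1) (w i) • (EuclideanSpace.proj i : Euc d →L[ℝ] ℝ)) w :=
  HasFDerivAt.finsetProd fun i _ =>
    (hf (m i) (w i)).comp_hasFDerivAt w (EuclideanSpace.proj i : Euc d →L[ℝ] ℝ).hasFDerivAt

lemma fderiv_sepProd_single (hf : ∀ n t, HasDerivAt (f n) (f (n + 1) t) t) (m : Fin d → ℕ)
    (w : Euc d) (i : Fin d) :
    fderiv ℝ (sepProd f m) w (EuclideanSpace.single i 1) = sepProd f (m + Pi.single i 1) w := by
  rw [(hasFDerivAt_sepProd hf m w).fderiv, _root_.sum_apply,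
    Finset.sum_eq_single i (fun j _ hj => by simp [hj]) (by simp), sepProd,
    ← Finset.prod_erase_mul _ _ (Finset.mem_univ i)]
  simp only [smul_apply, smul_eq_mul, PiLp.proj_apply, PiLp.single_apply, if_true,
    Pi.add_apply, Pi.single_eq_same, mul_one]
  congr 1
  exact Finset.prod_congr rfl fun j hj => by simp [Finset.ne_of_mem_erase hj]

lemma pder_sepProd_comp_sub (hf : ∀ n t, HasDerivAt (f n) (f (n + 1) t) t) (m : Fin d → ℕ)
    (u : Euc d) (i : Fin d) :
    pder i (fun z => sepProd f m (z - u)) = fun z => sepProd f (m + Pi.single i 1) (z - u) := by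
  ext z
  rw [pder, fderiv_comp_sub, fderiv_sepProd_single hf]

lemma iterate_pder_sepProd_comp_sub (hf : ∀ n t, HasDerivAt (f n) (f (n + 1) t) t)
    (m : Fin d → ℕ) (u : Euc d) (i : Fin d) (n : ℕ) :
    (pder i)^[n] (fun z => sepProd f m (z - u)) =
      fun z => sepProd f (m + Pi.single i n) (z - u) := by
  induction n with
  | zero => simp
  | succ n ih =>
    rw [Function.iterate_succ_apply', ih, pder_sepProd_comp_sub hf, add_assoc, ← Pi.single_add]

lemma pderMulti_sepProd_comp_sub (hf : ∀ n t, HasDerivAt (f n) (f (n + 1) t) t)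
    (α m : Fin d → ℕ) (u : Euc d) :
    pderMulti α (fun z => sepProd f m (z - u)) = fun z => sepProd f (m + α) (z - u) := by
  suffices ∀ l : List (Fin d), l.foldr (fun i g => (pder i)^[α i] g) (fun z => sepProd f m (z - u))
      = fun z => sepProd f (m + (l.map fun i => Pi.single i (α i)).sum) (z - u) by
    rw [pderMulti, this, ← Fin.sum_univ_def, Finset.univ_sum_single]
  intro l
  induction l with
  | nil => simp
  | cons i l ih =>
    rw [List.foldr_cons, ih, iterate_pder_sepProd_comp_sub hf, List.map_cons, List.sum_cons,
      add_comm (Pi.single i (α i) : Fin d → ℕ), add_assoc]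

lemma fderiv_sepProd_sub_single (hf : ∀ n t, HasDerivAt (f n) (f (n + 1) t) t)
    (m : Fin d → ℕ) (z u : Euc d) (i : Fin d) :
    fderiv ℝ (fun v => sepProd f m (z - v)) u (EuclideanSpace.single i 1) =
      -sepProd f (m + Pi.single i 1) (z - u) := by
  have h := (hasFDerivAt_sepProd hf m (z - u)).comp u ((hasFDerivAt_id u).const_sub z)
  rw [Function.comp_def] at h
  rw [h.fderiv, ContinuousLinearMap.comp_apply, ← fderiv_sepProd_single hf,
    ← (hasFDerivAt_sepProd hf m (z - u)).fderiv]
  simp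

end SepProd

section PderMulti

variable {d : ℕ}

lemma pder_neg (i : Fin d) (g : Euc d → ℝ) : pder i (fun z => -g z) = fun z => -pder i g z := by
  ext z
  simp [pder, fderiv_fun_neg]

lemma pderMulti_neg (α : Fin d → ℕ) (g : Euc d → ℝ) :
    pderMulti α (fun z => -g z) = fun z => -pderMulti α g z := by
  unfold pderMulti
  induction List.finRange d with
  | nil => rfl
  | cons i l ih =>
    rw [List.foldr_cons, List.foldr_cons, ih]
    have hcomm : Function.Commute (pder i) (fun g z => -g z) := pder_neg i
    exact hcomm.iterate_left (α i) _

lemma pder_sub_const (i : Fin d) (g : Euc d → ℝ) (a : ℝ) :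
    pder i (fun z => g z - a) = pder i g := by
  ext z
  simp [pder, fderiv_sub_const]

lemma iterate_pder_sub_const (i : Fin d) (n : ℕ) (g : Euc d → ℝ) (a : ℝ) :
    (pder i)^[n] (fun z => g z - a) = fun z => (pder i)^[n] g z - if n = 0 then a else 0 := by
  cases n with
  | zero => simp
  | succ n => simp [Function.iterate_succ_apply, pder_sub_const]

lemma pderMulti_sub_const (α : Fin d → ℕ) (g : Euc d → ℝ) (a : ℝ) :
    pderMulti α (fun z => g z - a) = fun z => pderMulti α g z - if α = 0 then a else 0 := by
  suffices ∀ l : List (Fin d), l.foldr (fun i g => (pder i)^[α i] g) (fun z => g z - a) =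
      fun z => l.foldr (fun i g => (pder i)^[α i] g) g z - if ∀ i ∈ l, α i = 0 then a else 0 by
    simp [pderMulti, this, funext_iff]
  intro l
  induction l with
  | nil => simp
  | cons i l ih =>
    rw [List.foldr_cons, List.foldr_cons, ih, iterate_pder_sub_const]
    by_cases hi : α i = 0 <;> simp [hi]

end PderMulti

lemma prod_exp_mul_sq {d : ℕ} (a : ℝ) (w : Euc d) :
    ∏ i, exp (a * w i ^ 2) = exp (a * ‖w‖ ^ 2) := by
  simp [← Real.exp_sum, ← Finset.mul_sum, EuclideanSpace.norm_sq_eq]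

lemma Finset.prod_one_add_mul_sub_one_le {ι : Type*} (s : Finset ι) {q : ℝ} (hq0 : 0 ≤ q)
    (hq1 : q ≤ 1) {y : ι → ℝ} (hy : ∀ i ∈ s, 0 ≤ y i) :
    ∏ i ∈ s, (1 + q * y i) - 1 ≤ q * (∏ i ∈ s, (1 + y i) - 1) := by
  classical
  induction s using Finset.induction_on with
  | empty => simp
  | insert a s ha ih =>
    have hy' : ∀ i ∈ s, 0 ≤ y i := fun i hi => hy i (Finset.mem_insert_of_mem hi)
    have hya := hy a (Finset.mem_insert_self a s)
    have hle : ∏ i ∈ s, (1 + q * y i) ≤ ∏ i ∈ s, (1 + y i) :=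
      Finset.prod_le_prod (fun i hi => by nlinarith [hy' i hi]) fun i hi => by
        nlinarith [hy' i hi]
    rw [Finset.prod_insert ha, Finset.prod_insert ha]
    nlinarith [ih hy', mul_nonneg hq0 hya]

section Bounds

variable {c p ε D : ℝ}

lemma abs_mayerFactorDeriv_le (hc : 0 ≤ c) (hp0 : 0 ≤ p) (hp1 : p ≤ 1) (hε : 0 ≤ ε)
    (hD1 : 1 ≤ D) {n : ℕ} {t : ℝ} (hP : |(gaussPoly c n).eval t| ≤ D * exp (ε * t ^ 2)) :
    |mayerFactorDeriv c p n t| ≤ (if n = 0 then 1 else 1 - p) * (D * exp ((c + ε) * t ^ 2)) := by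
  have hexp : exp ((c + ε) * t ^ 2) = exp (c * t ^ 2) * exp (ε * t ^ 2) := by
    rw [← Real.exp_add]; ring_nf
  cases n with
  | zero =>
    have h1 : 1 ≤ exp (c * t ^ 2) := one_le_exp (by positivity)
    have h2 : 1 ≤ exp (ε * t ^ 2) := one_le_exp (by positivity)
    rw [mayerFactorDeriv, abs_of_nonneg (by nlinarith), if_pos rfl, one_mul, hexp]
    nlinarith [mul_le_mul h1 h2 zero_le_one (by positivity), exp_pos (c * t ^ 2)]
  | succ n =>
    rw [mayerFactorDeriv, abs_mul, abs_mul, abs_of_nonneg (sub_nonneg.2 hp1),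
      abs_of_pos (exp_pos _), if_neg n.succ_ne_zero, hexp]
    have := mul_le_mul_of_nonneg_right hP (exp_pos (c * t ^ 2)).le
    nlinarith [sub_nonneg.2 hp1]

lemma abs_sepProd_mayerFactorDeriv_le {d N : ℕ} (hc : 0 ≤ c) (hp0 : 0 ≤ p) (hp1 : p ≤ 1)
    (hε : 0 ≤ ε) (hD1 : 1 ≤ D)
    (hD : ∀ n ≤ N, ∀ t, |(gaussPoly c n).eval t| ≤ D * exp (ε * t ^ 2))
    {m : Fin d → ℕ} (hm : ∀ i, m i ≤ N) (hm0 : m ≠ 0) (w : Euc d) :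
    |sepProd (mayerFactorDeriv c p) m w| ≤ (1 - p) * D ^ d * exp ((c + ε) * ‖w‖ ^ 2) := by
  obtain ⟨i₀, hi₀ : m i₀ ≠ 0⟩ := Function.ne_iff.1 hm0
  have hsmall : ∏ i, (if m i = 0 then 1 else 1 - p) ≤ 1 - p := by
    rw [← Finset.mul_prod_erase _ _ (Finset.mem_univ i₀), if_neg hi₀]
    refine mul_le_of_le_one_right (sub_nonneg.2 hp1) (Finset.prod_le_one (fun i _ => ?_) ?_)
    · split_ifs <;> linarith
    · intro i _; split_ifs <;> linarith
  calc |sepProd (mayerFactorDeriv c p) m w|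
      ≤ ∏ i, (if m i = 0 then 1 else 1 - p) * (D * exp ((c + ε) * w i ^ 2)) := by
        rw [sepProd, Finset.abs_prod]
        exact Finset.prod_le_prod (fun i _ => abs_nonneg _) fun i _ =>
          abs_mayerFactorDeriv_le hc hp0 hp1 hε hD1 (hD _ (hm i) _)
    _ = (∏ i, (if m i = 0 then 1 else 1 - p)) * D ^ d * exp ((c + ε) * ‖w‖ ^ 2) := by
        rw [Finset.prod_mul_distrib, Finset.prod_mul_distrib, prod_exp_mul_sq, Finset.prod_const,
          Finset.card_univ, Fintype.card_fin, mul_assoc]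
    _ ≤ (1 - p) * D ^ d * exp ((c + ε) * ‖w‖ ^ 2) := by gcongr

lemma abs_sepProd_mayerFactorDeriv_zero_sub_one_le {d : ℕ} (hc : 0 ≤ c) (hp0 : 0 ≤ p)
    (hp1 : p ≤ 1) (w : Euc d) :
    |sepProd (mayerFactorDeriv c p) 0 w - 1| ≤ (1 - p) * exp (c * ‖w‖ ^ 2) := by
  have hy : ∀ i ∈ Finset.univ, 0 ≤ exp (c * w i ^ 2) - 1 :=
    fun i _ => sub_nonneg.2 (one_le_exp (by positivity))
  have hfactor : sepProd (mayerFactorDeriv c p) 0 w =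
      ∏ i, (1 + (1 - p) * (exp (c * w i ^ 2) - 1)) :=
    Finset.prod_congr rfl fun i _ => by simp only [mayerFactorDeriv]; ring
  have hlow : 1 ≤ sepProd (mayerFactorDeriv c p) 0 w := by
    rw [hfactor]
    exact Finset.one_le_prod fun i hi =>
      le_add_of_nonneg_right (mul_nonneg (sub_nonneg.2 hp1) (hy i hi))
  have hup := Finset.univ.prod_one_add_mul_sub_one_le (sub_nonneg.2 hp1) (by linarith) hy
  simp only [add_sub_cancel, prod_exp_mul_sq] at hup
  rw [abs_of_nonneg (by linarith), hfactor]
  nlinarith [sub_nonneg.2 hp1]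

end Bounds

section Mayer

variable {d : ℕ} (κ : ℝ) {p : ℝ}

lemma KBK_eq_sepProd (u : Euc d) :
    KBK d κ p u = fun z => sepProd (mayerFactorDeriv (1 / 2 * (1 - κ)) p) 0 (z - u) - 1 :=
  rfl

lemma KBKd1_eq_sepProd (i : Fin d) (u : Euc d) :
    KBKd1 d κ p i u =
      fun z => -sepProd (mayerFactorDeriv (1 / 2 * (1 - κ)) p) (Pi.single i 1) (z - u) := by
  ext z
  simp only [KBKd1, KBK_eq_sepProd, fderiv_sub_const,
    fderiv_sepProd_sub_single (hasDerivAt_mayerFactorDeriv _ p), zero_add]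

lemma KBKd2_eq_sepProd (i j : Fin d) (u : Euc d) :
    KBKd2 d κ p i j u = fun z =>
      sepProd (mayerFactorDeriv (1 / 2 * (1 - κ)) p) (Pi.single j 1 + Pi.single i 1) (z - u) := by
  ext z
  simp only [KBKd2, KBKd1_eq_sepProd, fderiv_fun_neg, neg_apply,
    fderiv_sepProd_sub_single (hasDerivAt_mayerFactorDeriv _ p), neg_neg]

lemma KBKd3_eq_sepProd (i j k : Fin d) (u : Euc d) :
    KBKd3 d κ p i j k u = fun z => -sepProd (mayerFactorDeriv (1 / 2 * (1 - κ)) p)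
      (Pi.single k 1 + Pi.single j 1 + Pi.single i 1) (z - u) := by
  ext z
  simp only [KBKd3, KBKd2_eq_sepProd, fderiv_sepProd_sub_single (hasDerivAt_mayerFactorDeriv _ p)]

end Mayer

lemma exp_mul_norm_sub_sq_mul_exp_neg_le {E : Type*} [SeminormedAddCommGroup E] {a : ℝ}
    (ha0 : 0 ≤ a) (ha : a ≤ 1 / 2) {u : E} (hu : ‖u‖ ≤ 1) (z : E) :
    exp (a * ‖z - u‖ ^ 2) * exp (-‖z‖ ^ 2) ≤ exp 1 := by
  rw [← Real.exp_add, exp_le_exp]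
  have htri : ‖z - u‖ ≤ ‖z‖ + 1 := (norm_sub_le z u).trans (by linarith)
  have hsq : ‖z - u‖ ^ 2 ≤ 2 * ‖z‖ ^ 2 + 2 := by
    nlinarith [norm_nonneg (z - u), sq_nonneg (‖z‖ - 1)]
  nlinarith [mul_le_mul_of_nonneg_left hsq ha0, sq_nonneg ‖z‖]

lemma ENNReal.sum_fin_le_ofReal_mul {n : ℕ} {x : Fin n → ℝ≥0∞} {b : ℝ}
    (h : ∀ i, x i ≤ ENNReal.ofReal b) : ∑ i, x i ≤ ENNReal.ofReal (n * b) := by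
  calc ∑ i, x i ≤ ∑ _i : Fin n, ENNReal.ofReal b := Finset.sum_le_sum fun i _ => h i
    _ = ENNReal.ofReal (n * b) := by
      rw [Finset.sum_const, nsmul_eq_mul, ENNReal.ofReal_mul (Nat.cast_nonneg _),
        ENNReal.ofReal_natCast, Finset.card_univ, Fintype.card_fin]

section ZNorm

variable {d r₀ : ℕ}

lemma zNorm_neg (ζ : ℝ) (K : Euc d → ℝ) : zNorm d r₀ ζ (fun z => -K z) = zNorm d r₀ ζ K := by
  simp [zNorm, wfun, pderMulti_neg]

lemma zNorm_one_le_of_abs_pderMulti_le {K : Euc d → ℝ} {A a : ℝ} (hA : 0 ≤ A) (ha0 : 0 ≤ a)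
    (ha : a ≤ 1 / 2) {u : Euc d} (hu : ‖u‖ ≤ 1)
    (hK : ∀ α : Fin d → ℕ, (∀ i, α i ≤ r₀) → ∀ z, |pderMulti α K z| ≤ A * exp (a * ‖z - u‖ ^ 2)) :
    zNorm d r₀ 1 K ≤ ENNReal.ofReal ((mIdx d r₀).card * (A * exp 1)) := by
  refine iSup_le fun z => ENNReal.ofReal_le_ofReal ?_
  rw [← nsmul_eq_mul]
  refine Finset.sum_le_card_nsmul _ _ _ fun α _ => ?_
  have hα := hK (fun i => α i) (fun i => Nat.lt_succ_iff.1 (α i).isLt) z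
  calc 1 ^ (∑ i, (α i : ℕ)) * |pderMulti (fun i => (α i : ℕ)) K z| * exp (-(1 ^ 2)⁻¹ * ‖z‖ ^ 2)
      ≤ A * (exp (a * ‖z - u‖ ^ 2) * exp (-‖z‖ ^ 2)) := by
        simpa [mul_assoc] using mul_le_mul_of_nonneg_right hα (exp_pos (-‖z‖ ^ 2)).le
    _ ≤ A * exp 1 := by gcongr; exact exp_mul_norm_sub_sq_mul_exp_neg_le ha0 ha hu z

end ZNorm

section MayerBounds

variable {d r₀ : ℕ} {p ε D : ℝ}

lemma zNorm_sepProd_mayerFactorDeriv_le {c : ℝ} (hc : 0 ≤ c) (hp0 : 0 ≤ p) (hp1 : p ≤ 1)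
    (hε : 0 ≤ ε) (hcε : c + ε ≤ 1 / 2) (hD1 : 1 ≤ D)
    (hD : ∀ n ≤ r₀ + 3, ∀ t, |(gaussPoly c n).eval t| ≤ D * exp (ε * t ^ 2))
    {m : Fin d → ℕ} (hm : ∀ i, m i ≤ 3) (hm0 : m ≠ 0) {u : Euc d} (hu : ‖u‖ ≤ 1) :
    zNorm d r₀ 1 (fun z => sepProd (mayerFactorDeriv c p) m (z - u)) ≤
      ENNReal.ofReal ((mIdx d r₀).card * ((1 - p) * D ^ d * exp 1)) := by
  refine zNorm_one_le_of_abs_pderMulti_le (by bound) (by positivity) hcε hu fun α hα z => ?_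
  rw [pderMulti_sepProd_comp_sub (hasDerivAt_mayerFactorDeriv c p)]
  refine abs_sepProd_mayerFactorDeriv_le hc hp0 hp1 hε hD1 hD (fun i => ?_) ?_ _
  · simp only [Pi.add_apply]; linarith [hm i, hα i]
  · exact fun h => hm0 (add_eq_zero.1 h).1

lemma zNorm_KBK_le {κ : ℝ} (hκ1 : κ ≤ 1) (hp0 : 0 ≤ p) (hp1 : p ≤ 1) (hε : 0 ≤ ε)
    (hcε : 1 / 2 * (1 - κ) + ε ≤ 1 / 2) (hD1 : 1 ≤ D)
    (hD : ∀ n ≤ r₀, ∀ t, |(gaussPoly (1 / 2 * (1 - κ)) n).eval t| ≤ D * exp (ε * t ^ 2))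
    {u : Euc d} (hu : ‖u‖ ≤ 1) :
    zNorm d r₀ 1 (KBK d κ p u) ≤
      ENNReal.ofReal ((mIdx d r₀).card * ((1 - p) * D ^ d * exp 1)) := by
  have hc : 0 ≤ 1 / 2 * (1 - κ) := by linarith
  refine zNorm_one_le_of_abs_pderMulti_le (by bound) (by positivity) hcε hu fun α hα z => ?_
  rw [KBK_eq_sepProd, pderMulti_sub_const,
    pderMulti_sepProd_comp_sub (hasDerivAt_mayerFactorDeriv _ p), zero_add]
  split_ifs with hα0
  · subst hα0
    calc |sepProd (mayerFactorDeriv (1 / 2 * (1 - κ)) p) 0 (z - u) - 1|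
        ≤ (1 - p) * exp (1 / 2 * (1 - κ) * ‖z - u‖ ^ 2) :=
          abs_sepProd_mayerFactorDeriv_zero_sub_one_le hc hp0 hp1 _
      _ ≤ (1 - p) * (D ^ d * exp ((1 / 2 * (1 - κ) + ε) * ‖z - u‖ ^ 2)) := by
          refine mul_le_mul_of_nonneg_left ?_ (sub_nonneg.2 hp1)
          refine (exp_le_exp.2 ?_).trans (le_mul_of_one_le_left (exp_pos _).le (one_le_pow₀ hD1))
          nlinarith [sq_nonneg ‖z - u‖]
      _ = (1 - p) * D ^ d * exp ((1 / 2 * (1 - κ) + ε) * ‖z - u‖ ^ 2) := by ring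
  · simp only [sub_zero]
    exact abs_sepProd_mayerFactorDeriv_le hc hp0 hp1 hε hD1 hD hα hα0 _

lemma sum_zNorm_KBKd_le {κ : ℝ} (hκ1 : κ ≤ 1) (hp0 : 0 ≤ p) (hp1 : p ≤ 1) (hε : 0 ≤ ε)
    (hcε : 1 / 2 * (1 - κ) + ε ≤ 1 / 2) (hD1 : 1 ≤ D)
    (hD : ∀ n ≤ r₀ + 3, ∀ t, |(gaussPoly (1 / 2 * (1 - κ)) n).eval t| ≤ D * exp (ε * t ^ 2))
    {u : Euc d} (hu : ‖u‖ ≤ 1) :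
    (∑ i, zNorm d r₀ 1 (KBKd1 d κ p i u)) + (∑ i, ∑ j, zNorm d r₀ 1 (KBKd2 d κ p i j u)) +
        (∑ i, ∑ j, ∑ k, zNorm d r₀ 1 (KBKd3 d κ p i j k u)) ≤
      ENNReal.ofReal ((d + d ^ 2 + d ^ 3) * ((mIdx d r₀).card * (D ^ d * exp 1))) := by
  set B : ℝ := (mIdx d r₀).card * (D ^ d * exp 1)
  have hB : 0 ≤ B := by positivity
  have hderiv : ∀ m : Fin d → ℕ, (∀ i, m i ≤ 3) → m ≠ 0 →
      zNorm d r₀ 1 (fun z => sepProd (mayerFactorDeriv (1 / 2 * (1 - κ)) p) m (z - u)) ≤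
        ENNReal.ofReal B := fun m hm hm0 =>
    (zNorm_sepProd_mayerFactorDeriv_le (by linarith) hp0 hp1 hε hcε hD1 hD hm hm0 hu).trans
      (ENNReal.ofReal_le_ofReal (by nlinarith))
  have hsingle : ∀ i j : Fin d, (Pi.single i 1 : Fin d → ℕ) j ≤ 1 := fun i j => by
    by_cases h : j = i <;> simp [h]
  have hsingle0 : ∀ i : Fin d, (Pi.single i 1 : Fin d → ℕ) ≠ 0 := fun i =>
    Pi.single_ne_zero_iff.2 one_ne_zero
  have h1 : ∑ i, zNorm d r₀ 1 (KBKd1 d κ p i u) ≤ ENNReal.ofReal (d * B) :=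
    ENNReal.sum_fin_le_ofReal_mul fun i => by
      rw [KBKd1_eq_sepProd, zNorm_neg]
      exact hderiv _ (fun j => by linarith [hsingle i j]) (hsingle0 i)
  have h2 : ∑ i, ∑ j, zNorm d r₀ 1 (KBKd2 d κ p i j u) ≤ ENNReal.ofReal (d * (d * B)) :=
    ENNReal.sum_fin_le_ofReal_mul fun i => ENNReal.sum_fin_le_ofReal_mul fun j => by
      rw [KBKd2_eq_sepProd]
      exact hderiv _ (fun l => by simp only [Pi.add_apply]; linarith [hsingle i l, hsingle j l])
        fun h => hsingle0 j (add_eq_zero.1 h).1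
  have h3 : ∑ i, ∑ j, ∑ k, zNorm d r₀ 1 (KBKd3 d κ p i j k u) ≤
      ENNReal.ofReal (d * (d * (d * B))) :=
    ENNReal.sum_fin_le_ofReal_mul fun i => ENNReal.sum_fin_le_ofReal_mul fun j =>
      ENNReal.sum_fin_le_ofReal_mul fun k => by
        rw [KBKd3_eq_sepProd, zNorm_neg]
        exact hderiv _ (fun l => by
          simp only [Pi.add_apply]; linarith [hsingle i l, hsingle j l, hsingle k l])
          fun h => hsingle0 k (add_eq_zero.1 (add_eq_zero.1 h).1).1
  calc _ ≤ ENNReal.ofReal (d * B) + ENNReal.ofReal (d * (d * B)) +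
        ENNReal.ofReal (d * (d * (d * B))) := add_le_add (add_le_add h1 h2) h3
    _ = ENNReal.ofReal ((d + d ^ 2 + d ^ 3) * B) := by
        rw [← ENNReal.ofReal_add (by positivity) (by positivity),
          ← ENNReal.ofReal_add (by positivity) (by positivity)]
        ring_nf

end MayerBounds

theorem bk_mayer_function_bounds_general (d r₀ : ℕ) (κ : ℝ)
    (hκ0 : 0 < κ) (hκ1 : κ < 1) :
    ∀ ρ : ℝ, 0 < ρ →
      ∃ δ > (0 : ℝ), ∃ ζ > (0 : ℝ), ∃ M > (0 : ℝ), ∃ p₀ : ℝ, 0 < p₀ ∧ p₀ < 1 ∧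
        ∀ p : ℝ, p₀ < p → p ≤ 1 → ∀ u : Euc d, ‖u‖ ≤ δ →
          zNorm d r₀ ζ (KBK d κ p u) ≤ ENNReal.ofReal ρ ∧
          (∑ i, zNorm d r₀ ζ (KBKd1 d κ p i u)) +
              (∑ i, ∑ j, zNorm d r₀ ζ (KBKd2 d κ p i j u)) +
              (∑ i, ∑ j, ∑ k, zNorm d r₀ ζ (KBKd3 d κ p i j k u)) ≤
            ENNReal.ofReal M := by
  intro ρ hρ
  have hcε : 1 / 2 * (1 - κ) + κ / 4 ≤ 1 / 2 := by linarith
  obtain ⟨D, hD1, hD⟩ := exists_abs_gaussPoly_le (1 / 2 * (1 - κ)) (ε := κ / 4) (by positivity)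
    (r₀ + 3)
  set B : ℝ := (mIdx d r₀).card * (D ^ d * exp 1)
  have hB : 0 < B :=
    mul_pos (Nat.cast_pos.2 (Finset.card_pos.2 ⟨0, by simp [mIdx]⟩)) (by positivity)
  refine ⟨1, one_pos, 1, one_pos, (d + d ^ 2 + d ^ 3) * B + 1, by positivity,
    max (1 / 2) (1 - ρ / B), by positivity, max_lt (by norm_num) (by linarith [div_pos hρ hB]),
    fun p hp₀ hp1 u hu => ?_⟩
  have hp0 : 0 ≤ p := by linarith [le_max_left (1 / 2 : ℝ) (1 - ρ / B)]
  have hpB : (1 - p) * B ≤ ρ := by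
    have := (le_max_right (1 / 2 : ℝ) (1 - ρ / B)).trans_lt hp₀
    rw [sub_lt_comm, lt_div_iff₀ hB] at this
    exact this.le
  refine ⟨(zNorm_KBK_le hκ1.le hp0 hp1 (by positivity) hcε hD1 (fun n hn => hD n (by omega))
    hu).trans (ENNReal.ofReal_le_ofReal (by linarith)), ?_⟩
  exact (sum_zNorm_KBKd_le hκ1.le hp0 hp1 (by positivity) hcε hD1 hD hu).trans
    (ENNReal.ofReal_le_ofReal (by linarith))

/-- Bounds on the Mayer function of the Biskup–Kotecký potential and its first three
`u`-derivatives, for `p` close enough to `1`. -/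
theorem bk_mayer_function_bounds (d r₀ : ℕ) (hd : 1 ≤ d) (κ : ℝ)
    (hκ0 : 0 < κ) (hκ1 : κ < 1) :
    ∀ ρ : ℝ, 0 < ρ →
      ∃ δ > (0 : ℝ), ∃ ζ > (0 : ℝ), ∃ M > (0 : ℝ), ∃ p₀ : ℝ, 0 < p₀ ∧ p₀ < 1 ∧
        ∀ p : ℝ, p₀ < p → p ≤ 1 → ∀ u : Euc d, ‖u‖ ≤ δ →
          zNorm d r₀ ζ (KBK d κ p u) ≤ ENNReal.ofReal ρ ∧
          (∑ i, zNorm d r₀ ζ (KBKd1 d κ p i u)) +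
              (∑ i, ∑ j, zNorm d r₀ ζ (KBKd2 d κ p i j u)) +
              (∑ i, ∑ j, ∑ k, zNorm d r₀ ζ (KBKd3 d κ p i j k u)) ≤
            ENNReal.ofReal M :=
  bk_mayer_function_bounds_general d r₀ κ hκ0 hκ1

end
end

section
/- Evaluation of boundary terms: There exists a constant c with c < 3√2 such that for every v : ℤ → ℝ and every integer m > 1 one has v(−m)² + v(m+1)² ≤ (c/(2m+1))·Σ_{x=−m}^{m} v(x)² + c·(2m+1)·Σ_{x=−m}^{m} (∂v(x))². -/
/-- The forward difference operator `∂v(x) = v(x+1) − v(x)` on `ℤ`. -/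
def fdZ (v : ℤ → ℝ) (x : ℤ) : ℝ := v (x + 1) - v x

lemma tele (v : ℤ → ℝ) (a : ℤ) : ∀ n : ℕ, ∑ y ∈ Finset.Icc a (a + n), fdZ v y = v (a + n + 1) - v a := by
  intro n
  induction n with
  | zero => simp [fdZ]
  | succ k ih =>
    have h : Finset.Icc a (a + ((k:ℤ)+1)) = insert (a + k + 1) (Finset.Icc a (a + k)) := by
      ext x; simp; omega
    push_cast
    rw [h, Finset.sum_insert (by simp), ih]
    simp only [fdZ]
    ring_nf

lemma tele' (v : ℤ → ℝ) (a b : ℤ) (h : a ≤ b) :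
    ∑ y ∈ Finset.Icc a b, fdZ v y = v (b + 1) - v a := by
  have hn : b = a + ((b - a).toNat : ℤ) := by omega
  rw [hn]
  exact tele v a _

/-- Cauchy–Schwarz step: square of a sub-sum of differences bounded by full ℓ² sum. -/
lemma subsum_sq (v : ℤ → ℝ) (I J : Finset ℤ) (hJ : J ⊆ I) :
    (∑ y ∈ J, fdZ v y) ^ 2 ≤ (I.card : ℝ) * ∑ y ∈ I, fdZ v y ^ 2 := by
  calc (∑ y ∈ J, fdZ v y) ^ 2 ≤ (J.card : ℝ) * ∑ y ∈ J, fdZ v y ^ 2 :=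
        sq_sum_le_card_mul_sum_sq (s := J) (f := fun y => fdZ v y)
    _ ≤ (I.card : ℝ) * ∑ y ∈ I, fdZ v y ^ 2 := by
        apply mul_le_mul
        · exact_mod_cast Finset.card_le_card hJ
        · exact Finset.sum_le_sum_of_subset_of_nonneg hJ (fun i _ _ => sq_nonneg _)
        · exact Finset.sum_nonneg fun i _ => sq_nonneg _
        · positivity

/-- Evaluation of the boundary terms: there is a constant `c < 3√2` controlling the
boundary values `v(−m)² + v(m+1)²` by the bulk `ℓ²`-norms of `v` and `∂v`. -/
theorem boundary_term_estimate :
    ∃ c : ℝ, c < 3 * Real.sqrt 2 ∧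
      ∀ (v : ℤ → ℝ) (m : ℕ), 1 < m →
        v (-(m : ℤ)) ^ 2 + v ((m : ℤ) + 1) ^ 2 ≤
          c / (2 * (m : ℝ) + 1) * (∑ x ∈ Finset.Icc (-(m : ℤ)) (m : ℤ), v x ^ 2) +
            c * (2 * (m : ℝ) + 1) * (∑ x ∈ Finset.Icc (-(m : ℤ)) (m : ℤ), fdZ v x ^ 2) := by
  refine ⟨4, ?_, ?_⟩
  · nlinarith [Real.sq_sqrt (by norm_num : (2:ℝ) ≥ 0), Real.sqrt_nonneg 2,
      Real.sqrt_le_sqrt (by norm_num : (2:ℝ) ≤ 4)]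
  intro v m hm
  set I := Finset.Icc (-(m : ℤ)) (m : ℤ) with hI
  set S1 := ∑ x ∈ I, v x ^ 2 with hS1
  set S2 := ∑ x ∈ I, fdZ v x ^ 2 with hS2
  have hS2nn : 0 ≤ S2 := Finset.sum_nonneg fun i _ => sq_nonneg _
  have hcard : (I.card : ℝ) = 2 * (m : ℝ) + 1 := by
    rw [hI, Int.card_Icc]
    have h2 : ((m:ℤ) + 1 - -(m:ℤ)).toNat = 2 * m + 1 := by omega
    rw [h2]; push_cast; ring
  have hN : (0:ℝ) < 2 * (m : ℝ) + 1 := by positivity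
  have hpt : ∀ x ∈ I, v (-(m:ℤ)) ^ 2 + v ((m:ℤ) + 1) ^ 2 ≤
      4 * v x ^ 2 + 4 * ((2 * (m:ℝ) + 1) * S2) := by
    intro x hx
    simp only [hI, Finset.mem_Icc] at hx
    have hf : v ((m:ℤ) + 1) = v x + ∑ y ∈ Finset.Icc x (m:ℤ), fdZ v y := by
      rw [tele' v x m hx.2]; ring
    have hf2 : (∑ y ∈ Finset.Icc x (m:ℤ), fdZ v y) ^ 2 ≤ (2 * (m:ℝ) + 1) * S2 := by
      rw [← hcard]
      exact subsum_sq v I _ (by intro y; simp [hI, Finset.mem_Icc]; omega)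
    have hb : v (-(m:ℤ)) = v x - ∑ y ∈ Finset.Icc (-(m:ℤ)) (x - 1), fdZ v y := by
      rcases eq_or_lt_of_le hx.1 with h | h
      · rw [← h]
        have he : Finset.Icc (-(m:ℤ)) (-(m:ℤ) - 1) = ∅ := by
          apply Finset.Icc_eq_empty; omega
        simp [he]
      · rw [tele' v _ _ (by omega : -(m:ℤ) ≤ x - 1)]
        have hxx : x - 1 + 1 = x := by ring
        rw [hxx]; ring
    have hb2 : (∑ y ∈ Finset.Icc (-(m:ℤ)) (x-1), fdZ v y) ^ 2 ≤ (2 * (m:ℝ) + 1) * S2 := by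
      rw [← hcard]
      exact subsum_sq v I _ (by intro y; simp [hI, Finset.mem_Icc]; omega)
    rw [hf, hb]
    nlinarith [sq_nonneg (v x - ∑ y ∈ Finset.Icc x (m:ℤ), fdZ v y),
      sq_nonneg (v x + ∑ y ∈ Finset.Icc (-(m:ℤ)) (x-1), fdZ v y), hf2, hb2]
  have hsum := Finset.sum_le_sum hpt
  rw [Finset.sum_const, nsmul_eq_mul] at hsum
  have hsum2 : (2 * (m:ℝ) + 1) * (v (-(m:ℤ)) ^ 2 + v ((m:ℤ) + 1) ^ 2) ≤
      4 * S1 + (2 * (m:ℝ) + 1) * (4 * ((2 * (m:ℝ) + 1) * S2)) := by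
    calc (2 * (m:ℝ) + 1) * (v (-(m:ℤ)) ^ 2 + v ((m:ℤ) + 1) ^ 2)
        = (I.card : ℝ) * (v (-(m:ℤ)) ^ 2 + v ((m:ℤ) + 1) ^ 2) := by rw [hcard]
      _ ≤ ∑ x ∈ I, (4 * v x ^ 2 + 4 * ((2 * (m:ℝ) + 1) * S2)) := hsum
      _ = 4 * S1 + (I.card : ℝ) * (4 * ((2 * (m:ℝ) + 1) * S2)) := by
          rw [Finset.sum_add_distrib, Finset.sum_const, nsmul_eq_mul, ← Finset.mul_sum]
      _ = 4 * S1 + (2 * (m:ℝ) + 1) * (4 * ((2 * (m:ℝ) + 1) * S2)) := by rw [hcard]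
  have hgoal : v (-(m:ℤ)) ^ 2 + v ((m:ℤ) + 1) ^ 2 ≤
      (4 * S1 + (2 * (m:ℝ) + 1) * (4 * ((2 * (m:ℝ) + 1) * S2))) / (2 * (m:ℝ) + 1) := by
    rw [le_div_iff₀ hN, mul_comm]
    exact hsum2
  calc v (-(m:ℤ)) ^ 2 + v ((m:ℤ) + 1) ^ 2
      ≤ (4 * S1 + (2 * (m:ℝ) + 1) * (4 * ((2 * (m:ℝ) + 1) * S2))) / (2 * (m:ℝ) + 1) := hgoal
    _ = 4 / (2 * (m:ℝ) + 1) * S1 + 4 * (2 * (m:ℝ) + 1) * S2 := by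
        field_simp
end

section
/- There exists a constant c with c < 3√2 such that for all u, v : ℤ → ℝ, every integer m > 1 and every η > 0: |Σ_{x=−m}^{m} ∂u(x)·∂v(x)| ≤ (1/2)·(2m+1)²·(1/η)·Σ_{x=−m}^{m} ((∂*∂u)(x))² + (1/2)·(η/(2m+1)²)·Σ_{x=−m}^{m} v(x)² + ((2m+1)/(2η))·[ (∂u(−m−1))² + (∂u(m))² ] + (c·η/2)·[ (1/(2m+1)²)·Σ_{x=−m}^{m} v(x)² + Σ_{x=−m}^{m} (∂v(x))² ]. -/
/-- The backward difference operator `∂*v(x) = v(x−1) − v(x)` on `ℤ`. -/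
def bdZ (v : ℤ → ℝ) (x : ℤ) : ℝ := v (x - 1) - v x

/-!
Summation by parts turns `Σ ∂u ∂v` into `Σ (∂*∂u) v` plus the two boundary products
`∂u(m) v(m+1)` and `∂u(-m-1) v(-m)`. Young's inequality with weight `n² / η` (where `n = 2m+1`)
handles the interior sum, and weight `n / η` the boundary products. The boundary values of `v`
are controlled by the discrete trace inequality `n v(y)² ≤ 2 Σ v² + 2 n² Σ (∂v)²`, obtained by
averaging `v(y)² ≤ 2 v(x)² + 2 (v(y) - v(x))²` over `x` and bounding `v(y) - v(x)` by
Cauchy–Schwarz. Each of the two boundary products then costs `η (Σ v² / n² + Σ (∂v)²)`,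
whence `c = 4 < 3√2`.
-/

open Finset

theorem sum_Icc_fdZ (v : ℤ → ℝ) {A B : ℤ} (h : A ≤ B + 1) :
    ∑ t ∈ Icc A B, fdZ v t = v (B + 1) - v A := by
  induction B, (show A - 1 ≤ B by omega) using Int.leInduction with
  | base => simp
  | succ B hB ih =>
    rw [← insert_Icc_right_eq_Icc_add_one (by omega), sum_insert (by simp), ih (by omega), fdZ]
    ring

theorem sum_Icc_mul_fdZ (a b : ℤ → ℝ) {A B : ℤ} (h : A ≤ B + 1) :
    ∑ x ∈ Icc A B, a x * fdZ b x =
      ∑ x ∈ Icc A B, bdZ a x * b x + a B * b (B + 1) - a (A - 1) * b A := by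
  have telescope := sum_Icc_fdZ (fun x => a (x - 1) * b x) h
  simp only [fdZ, add_sub_cancel_right] at telescope
  rw [add_sub_assoc, ← telescope, ← sum_add_distrib]
  refine sum_congr rfl fun x _ => ?_
  simp only [fdZ, bdZ]
  ring

theorem abs_sub_le_sum_abs_fdZ (v : ℤ → ℝ) {A B x y : ℤ} (hx : x ∈ Icc A (B + 1))
    (hy : y ∈ Icc A (B + 1)) : |v y - v x| ≤ ∑ t ∈ Icc A B, |fdZ v t| := by
  wlog hxy : x ≤ y generalizing x y
  · rw [abs_sub_comm]; exact this hy hx (by omega)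
  rw [mem_Icc] at hx hy
  calc |v y - v x| = |∑ t ∈ Icc x (y - 1), fdZ v t| := by
        rw [sum_Icc_fdZ v (by omega), sub_add_cancel]
    _ ≤ ∑ t ∈ Icc x (y - 1), |fdZ v t| := abs_sum_le_sum_abs _ _
    _ ≤ ∑ t ∈ Icc A B, |fdZ v t| :=
        sum_le_sum_of_subset_of_nonneg (Icc_subset_Icc (by omega) (by omega))
          fun _ _ _ => abs_nonneg _

theorem sq_sub_le_card_mul_sum_sq_fdZ (v : ℤ → ℝ) {A B x y : ℤ} (hx : x ∈ Icc A (B + 1))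
    (hy : y ∈ Icc A (B + 1)) :
    (v y - v x) ^ 2 ≤ #(Icc A B) * ∑ t ∈ Icc A B, fdZ v t ^ 2 := by
  calc (v y - v x) ^ 2 ≤ (∑ t ∈ Icc A B, |fdZ v t|) ^ 2 := by
        rw [← sq_abs]
        exact pow_le_pow_left₀ (abs_nonneg _) (abs_sub_le_sum_abs_fdZ v hx hy) 2
    _ ≤ #(Icc A B) * ∑ t ∈ Icc A B, |fdZ v t| ^ 2 := sq_sum_le_card_mul_sum_sq
    _ = #(Icc A B) * ∑ t ∈ Icc A B, fdZ v t ^ 2 := by simp only [sq_abs]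

theorem card_mul_sq_le_sum_sq_add_sum_sq_fdZ (v : ℤ → ℝ) {A B y : ℤ} (hy : y ∈ Icc A (B + 1)) :
    #(Icc A B) * v y ^ 2 ≤
      2 * ∑ x ∈ Icc A B, v x ^ 2 + 2 * #(Icc A B) ^ 2 * ∑ x ∈ Icc A B, fdZ v x ^ 2 := by
  set n : ℝ := ((#(Icc A B) : ℕ) : ℝ)
  set D := ∑ x ∈ Icc A B, fdZ v x ^ 2
  have pointwise : ∀ x ∈ Icc A B, v y ^ 2 ≤ 2 * v x ^ 2 + 2 * (n * D) := by
    intro x hx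
    have hx' : x ∈ Icc A (B + 1) := by rw [mem_Icc] at hx ⊢; omega
    nlinarith [sq_sub_le_card_mul_sum_sq_fdZ v hx' hy, sq_nonneg (v y - 2 * v x)]
  calc n * v y ^ 2 = #(Icc A B) • v y ^ 2 := (nsmul_eq_mul _ _).symm
    _ ≤ ∑ x ∈ Icc A B, (2 * v x ^ 2 + 2 * (n * D)) := card_nsmul_le_sum _ _ _ pointwise
    _ = 2 * ∑ x ∈ Icc A B, v x ^ 2 + 2 * n ^ 2 * D := by
        rw [sum_add_distrib, ← mul_sum, sum_const, nsmul_eq_mul]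
        ring

section Young

variable {α : Type*} [Field α] [LinearOrder α] [IsStrictOrderedRing α]

theorem two_mul_abs_mul_le {K : α} (hK : 0 < K) (a b : α) :
    2 * |a * b| ≤ K * a ^ 2 + K⁻¹ * b ^ 2 := by
  simpa only [abs_mul, sq_abs, mul_assoc] using two_mul_le_add_mul_sq (a := |a|) (b := |b|) hK

theorem two_mul_abs_sum_mul_le {ι : Type*} (s : Finset ι) (f g : ι → α) {K : α} (hK : 0 < K) :
    2 * |∑ i ∈ s, f i * g i| ≤ K * ∑ i ∈ s, f i ^ 2 + K⁻¹ * ∑ i ∈ s, g i ^ 2 := by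
  calc 2 * |∑ i ∈ s, f i * g i| ≤ ∑ i ∈ s, 2 * |f i * g i| := by
        rw [← mul_sum]; gcongr; exact abs_sum_le_sum_abs _ _
    _ ≤ ∑ i ∈ s, (K * f i ^ 2 + K⁻¹ * g i ^ 2) :=
        sum_le_sum fun i _ => two_mul_abs_mul_le hK _ _
    _ = K * ∑ i ∈ s, f i ^ 2 + K⁻¹ * ∑ i ∈ s, g i ^ 2 := by
        rw [sum_add_distrib, mul_sum, mul_sum]

end Young

theorem abs_sum_fdZ_mul_fdZ_le (u v : ℤ → ℝ) {A B : ℤ} (hAB : A ≤ B) {η : ℝ} (hη : 0 < η) :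
    let n : ℝ := #(Icc A B)
    |∑ x ∈ Icc A B, fdZ u x * fdZ v x| ≤
      n ^ 2 / (2 * η) * ∑ x ∈ Icc A B, bdZ (fdZ u) x ^ 2 + η / (2 * n ^ 2) * ∑ x ∈ Icc A B, v x ^ 2
        + n / (2 * η) * (fdZ u (A - 1) ^ 2 + fdZ u B ^ 2)
        + 2 * η * ((∑ x ∈ Icc A B, v x ^ 2) / n ^ 2 + ∑ x ∈ Icc A B, fdZ v x ^ 2) := by
  intro n
  have hn : 0 < n := by simp [n, hAB]
  set S := ∑ x ∈ Icc A B, v x ^ 2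
  set D := ∑ x ∈ Icc A B, fdZ v x ^ 2
  have boundary_value (y : ℤ) (hy : y ∈ Icc A (B + 1)) :
      η / n * v y ^ 2 ≤ 2 * η * (S / n ^ 2 + D) := by
    have := card_mul_sq_le_sum_sq_add_sum_sq_fdZ v hy
    rw [div_mul_eq_mul_div, div_le_iff₀ hn]
    field_simp
    nlinarith
  have interior := two_mul_abs_sum_mul_le (Icc A B) (bdZ (fdZ u)) v (K := n ^ 2 / η) (by positivity)
  have upper := two_mul_abs_mul_le (K := n / η) (by positivity) (fdZ u B) (v (B + 1))
  have lower := two_mul_abs_mul_le (K := n / η) (by positivity) (fdZ u (A - 1)) (v A)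
  rw [inv_div] at interior upper lower
  have upper_value := boundary_value (B + 1) (by simp; omega)
  have lower_value := boundary_value A (by simp; omega)
  calc |∑ x ∈ Icc A B, fdZ u x * fdZ v x|
      ≤ |∑ x ∈ Icc A B, bdZ (fdZ u) x * v x| + |fdZ u B * v (B + 1)| + |fdZ u (A - 1) * v A| := by
        rw [sum_Icc_mul_fdZ _ _ (by omega)]
        exact (abs_sub _ _).trans (add_le_add_left (abs_add_le _ _) _)
    _ ≤ _ := by
        linear_combination (interior + upper + lower + upper_value + lower_value) / 2

/-- Estimate of the mixed term `Σ ∂u ∂v` with a constant `c < 3√2` and free parameter `η > 0`. -/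
theorem mixed_term_estimate :
    ∃ c : ℝ, c < 3 * Real.sqrt 2 ∧
      ∀ (u v : ℤ → ℝ) (m : ℕ), 1 < m → ∀ η : ℝ, 0 < η →
        |∑ x ∈ Finset.Icc (-(m : ℤ)) (m : ℤ), fdZ u x * fdZ v x| ≤
          1 / 2 * (2 * (m : ℝ) + 1) ^ 2 * (1 / η) *
              (∑ x ∈ Finset.Icc (-(m : ℤ)) (m : ℤ), bdZ (fdZ u) x ^ 2) +
            1 / 2 * (η / (2 * (m : ℝ) + 1) ^ 2) *
              (∑ x ∈ Finset.Icc (-(m : ℤ)) (m : ℤ), v x ^ 2) +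
            (2 * (m : ℝ) + 1) / (2 * η) *
              (fdZ u (-(m : ℤ) - 1) ^ 2 + fdZ u (m : ℤ) ^ 2) +
            c * η / 2 *
              (1 / (2 * (m : ℝ) + 1) ^ 2 *
                  (∑ x ∈ Finset.Icc (-(m : ℤ)) (m : ℤ), v x ^ 2) +
                ∑ x ∈ Finset.Icc (-(m : ℤ)) (m : ℤ), fdZ v x ^ 2) := by
  refine ⟨4, ?_, fun u v m _ η hη => ?_⟩
  · rw [← div_lt_iff₀' (by norm_num), Real.lt_sqrt (by norm_num)]
    norm_num
  have hcard : (#(Icc (-(m : ℤ)) m) : ℝ) = 2 * m + 1 := by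
    rw [← Nat.cast_ofNat, ← Nat.cast_mul, ← Nat.cast_succ, Nat.cast_inj, Int.card_Icc]
    omega
  have estimate := abs_sum_fdZ_mul_fdZ_le u v (by omega : -(m : ℤ) ≤ m) hη
  rw [hcard] at estimate
  generalize 2 * (m : ℝ) + 1 = n at estimate ⊢
  exact estimate.trans_eq (by ring)
end

section
/- Boundary estimate for cubes in ℤ^d: There exists a constant c with c < 3√2 such that the following holds for every dimension d ≥ 1. Let m > 1 be an integer, n = 2m+1, a ∈ ℤ^d, and let B = {x ∈ ℤ^d : |x_i − a_i| ≤ m for all i} be the cube of side n centred at a. Then for every v : ℤ^d → ℝ and every i ∈ {1,…,d}: Σ_{x∈∂_i^+ B} v(x)² ≤ c·( n^{−1}·Σ_{x∈B} v(x)² + n·Σ_{x∈B} (∇_i v(x))² ) and Σ_{x∈∂_i^− B} v(x)² ≤ c·( n^{−1}·Σ_{x∈B} v(x)² + n·Σ_{x∈B} (∇_i^* v(x))² ). -/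
/-!
Both estimates are one-dimensional. Every line parallel to `eᵢ` that meets the cube `B` cuts
out a segment `W` of `n = 2m + 1` points and meets `∂ᵢ⁺B` (resp. `∂ᵢ⁻B`) in two points
`p ≤ q` with `W ⊆ [p, q]` and `q - p = n`. On such a line, Cauchy–Schwarz applied to the
telescoping sums from `p` and from `q` to any `k ∈ W` gives
`f p² + f q² ≤ 4 f k² + 4 n ∑ (∇f)²`, and averaging over `k ∈ W` gives the estimate with the
constant `4 < 3√2`.
-/

/-- Points of the lattice `ℤ^d`. -/
abbrev LatticePt (d : ℕ) := Fin d → ℤ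

/-- Discrete derivative `∇ᵢv(x) = v(x+eᵢ) − v(x)`. -/
def gradPlus {d : ℕ} (i : Fin d) (v : LatticePt d → ℝ) (x : LatticePt d) : ℝ :=
  v (x + Pi.single i 1) - v x

/-- Discrete derivative `∇ᵢ*v(x) = v(x−eᵢ) − v(x)`. -/
def gradMinus {d : ℕ} (i : Fin d) (v : LatticePt d → ℝ) (x : LatticePt d) : ℝ :=
  v (x - Pi.single i 1) - v x

/-- The cube `B = {x ∈ ℤ^d : |xᵢ − aᵢ| ≤ m ∀i}` of side `n = 2m+1` centred at `a`. -/
noncomputable def cubeAt (d m : ℕ) (a : LatticePt d) : Finset (LatticePt d) :=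
  Fintype.piFinset fun j => Finset.Icc (a j - (m : ℤ)) (a j + (m : ℤ))

/-- `∂ᵢ⁻B = {x : (x ∉ B ∧ x+eᵢ ∈ B) ∨ (x ∈ B ∧ x+eᵢ ∉ B)}`. -/
def bdryMinus {d : ℕ} (B : Finset (LatticePt d)) (i : Fin d) : Finset (LatticePt d) :=
  (B ∪ B.image fun x => x - Pi.single i 1).filter fun x =>
    (x ∉ B ∧ x + Pi.single i 1 ∈ B) ∨ (x ∈ B ∧ x + Pi.single i 1 ∉ B)

/-- `∂ᵢ⁺B = ∂ᵢ⁻B + eᵢ`. -/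
def bdryPlus {d : ℕ} (B : Finset (LatticePt d)) (i : Fin d) : Finset (LatticePt d) :=
  (bdryMinus B i).image fun x => x + Pi.single i 1

open Finset Function

namespace Int

theorem sum_Ico_sub_eq {M : Type*} [AddCommGroup M] (f : ℤ → M) {p q : ℤ} (hpq : p ≤ q) :
    ∑ t ∈ Ico p q, (f (t + 1) - f t) = f q - f p := by
  induction q, hpq using Int.leInduction with
  | base => simp
  | succ q hpq ih =>
    rw [← insert_Ico_right_eq_Ico_add_one hpq, sum_insert (by simp), ih, sub_add_sub_cancel]

theorem sq_sub_le_mul_sum_sq_sub (f : ℤ → ℝ) {p q r s : ℤ} (hpr : p ≤ r) (hrs : r ≤ s)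
    (hsq : s ≤ q) : (f s - f r) ^ 2 ≤ (q - p) * ∑ t ∈ Ico p q, (f (t + 1) - f t) ^ 2 := by
  have hcard : (#(Ico r s) : ℝ) ≤ q - p := by
    have : (#(Ico r s) : ℤ) ≤ q - p := by rw [card_Ico]; omega
    exact_mod_cast this
  rw [← sum_Ico_sub_eq f hrs]
  refine sq_sum_le_card_mul_sum_sq.trans (mul_le_mul hcard ?_ (by positivity) ?_)
  · exact sum_le_sum_of_subset_of_nonneg (Ico_subset_Ico hpr hsq) fun _ _ _ => sq_nonneg _
  · exact (Nat.cast_nonneg _).trans hcard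

theorem sq_add_sq_le_of_mem_Icc (f : ℤ → ℝ) {p q k : ℤ} (hk : k ∈ Icc p q) :
    f p ^ 2 + f q ^ 2 ≤
      4 * f k ^ 2 + 4 * ((q - p) * ∑ t ∈ Ico p q, (f (t + 1) - f t) ^ 2) := by
  rw [mem_Icc] at hk
  have h₁ := sq_sub_le_mul_sum_sq_sub f le_rfl hk.1 hk.2
  have h₂ := sq_sub_le_mul_sum_sq_sub f hk.1 hk.2 le_rfl
  nlinarith [sq_nonneg (f k + (f k - f p)), sq_nonneg (f k + (f q - f k))]

theorem sq_add_sq_le_of_subset_Icc (f : ℤ → ℝ) {p q : ℤ} {W : Finset ℤ} (hW : W ⊆ Icc p q)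
    (hW₀ : W.Nonempty) (hcard : q - p ≤ #W) :
    f p ^ 2 + f q ^ 2 ≤
      4 * ((#W : ℝ)⁻¹ * ∑ t ∈ W, f t ^ 2 + #W * ∑ t ∈ Ico p q, (f (t + 1) - f t) ^ 2) := by
  set G := ∑ t ∈ Ico p q, (f (t + 1) - f t) ^ 2
  have hn : (0 : ℝ) < #W := by exact_mod_cast hW₀.card_pos
  have hpoint : ∀ k ∈ W, f p ^ 2 + f q ^ 2 ≤ 4 * f k ^ 2 + 4 * (#W * G) := by
    intro k hk
    refine (sq_add_sq_le_of_mem_Icc f (hW hk)).trans ?_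
    have hG : 0 ≤ G := sum_nonneg fun _ _ => sq_nonneg _
    gcongr
    exact_mod_cast hcard
  have havg := card_nsmul_le_sum W (fun k => 4 * f k ^ 2 + 4 * (#W * G)) _ hpoint
  rw [sum_add_distrib, ← mul_sum, sum_const, nsmul_eq_mul, nsmul_eq_mul] at havg
  rw [← mul_le_mul_iff_of_pos_left hn]
  calc (#W : ℝ) * (f p ^ 2 + f q ^ 2) ≤ 4 * ∑ t ∈ W, f t ^ 2 + #W * (4 * (#W * G)) := havg
    _ = #W * (4 * ((#W : ℝ)⁻¹ * ∑ t ∈ W, f t ^ 2 + #W * G)) := by field_simp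

end Int

theorem Finset.sum_eq_sum_sum_update {ι α M : Type*} [DecidableEq ι] [DecidableEq α]
    [AddCommMonoid M] {T Q : Finset (ι → α)} {I : Finset α} (i : ι) (c : α)
    (hT : ∀ x, x ∈ T ↔ update x i c ∈ Q ∧ x i ∈ I) (F : (ι → α) → M) :
    ∑ x ∈ T, F x = ∑ y ∈ Q with y i = c, ∑ s ∈ I, F (update y i s) := by
  rw [← sum_product']
  refine sum_nbij' (fun x => (update x i c, x i)) (fun p => update p.1 i p.2)
    (fun x hx => by simp_all) (fun ⟨y, s⟩ h => ?_) (fun x _ => by simp)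
    (fun ⟨y, s⟩ h => by simp_all) (fun x _ => by simp)
  obtain ⟨⟨hy, rfl⟩, hs⟩ : (y ∈ Q ∧ y i = c) ∧ s ∈ I := by simpa using h
  simp [hT, hy, hs]

namespace Function

variable {ι M : Type*} [DecidableEq ι]

theorem update_add_single [AddZeroClass M] (x : ι → M) (i : ι) (b c : M) :
    update (x + Pi.single i b) i c = update x i c := by
  ext j; rcases eq_or_ne j i with rfl | h <;> simp [*]

theorem update_sub_single [AddGroup M] (x : ι → M) (i : ι) (b c : M) :
    update (x - Pi.single i b) i c = update x i c := by
  ext j; rcases eq_or_ne j i with rfl | h <;> simp [*]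

theorem update_add_single_self [AddZeroClass M] (x : ι → M) (i : ι) (b c : M) :
    update x i b + Pi.single i c = update x i (b + c) := by
  ext j; rcases eq_or_ne j i with rfl | h <;> simp [*]

theorem update_sub_single_self [AddGroup M] (x : ι → M) (i : ι) (b c : M) :
    update x i b - Pi.single i c = update x i (b - c) := by
  ext j; rcases eq_or_ne j i with rfl | h <;> simp [*]

end Function

theorem Int.card_Icc_sub_add (c : ℤ) (m : ℕ) : #(Icc (c - m) (c + m)) = 2 * m + 1 := by
  rw [Int.card_Icc]
  omega

variable {d m : ℕ} {a x : LatticePt d} {i : Fin d}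

theorem mem_cubeAt_iff_update :
    x ∈ cubeAt d m a ↔ update x i (a i) ∈ cubeAt d m a ∧ x i ∈ Icc (a i - m) (a i + m) := by
  simp only [cubeAt, Fintype.mem_piFinset]
  constructor
  · intro h
    exact ⟨fun j => by rcases eq_or_ne j i with rfl | hj <;> simp [*], h i⟩
  · rintro ⟨h, hi⟩ j
    rcases eq_or_ne j i with rfl | hj
    · exact hi
    · simpa [hj] using h j

theorem sum_cubeAt_eq_sum_slices {M : Type*} [AddCommMonoid M] (i : Fin d)
    (F : LatticePt d → M) :
    ∑ x ∈ cubeAt d m a, F x =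
      ∑ y ∈ cubeAt d m a with y i = a i, ∑ s ∈ Icc (a i - m) (a i + m), F (update y i s) :=
  sum_eq_sum_sum_update i (a i) (fun _ => mem_cubeAt_iff_update) F

theorem mem_bdryMinus_iff {B : Finset (LatticePt d)} :
    x ∈ bdryMinus B i ↔
      (x ∉ B ∧ x + Pi.single i 1 ∈ B) ∨ (x ∈ B ∧ x + Pi.single i 1 ∉ B) := by
  simp only [bdryMinus, mem_filter, mem_union, mem_image, and_iff_right_iff_imp]
  rintro (⟨-, h⟩ | ⟨h, -⟩)
  · exact Or.inr ⟨_, h, add_sub_cancel_right x _⟩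
  · exact Or.inl h

theorem mem_bdryPlus_iff {B : Finset (LatticePt d)} :
    x ∈ bdryPlus B i ↔ x - Pi.single i 1 ∈ bdryMinus B i := by
  simp only [bdryPlus, mem_image]
  exact ⟨by rintro ⟨y, hy, rfl⟩; simpa using hy, fun h => ⟨_, h, sub_add_cancel x _⟩⟩

theorem mem_bdryMinus_cubeAt :
    x ∈ bdryMinus (cubeAt d m a) i ↔
      update x i (a i) ∈ cubeAt d m a ∧ x i ∈ ({a i - m - 1, a i + m} : Finset ℤ) := by
  rw [mem_bdryMinus_iff, mem_cubeAt_iff_update (i := i),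
    mem_cubeAt_iff_update (x := x + _) (i := i), update_add_single]
  simp only [Pi.add_apply, Pi.single_eq_same, mem_Icc, mem_insert, mem_singleton]
  by_cases h : update x i (a i) ∈ cubeAt d m a
  · simp only [h, true_and]
    omega
  · simp [h]

theorem mem_bdryPlus_cubeAt :
    x ∈ bdryPlus (cubeAt d m a) i ↔
      update x i (a i) ∈ cubeAt d m a ∧ x i ∈ ({a i - m, a i + m + 1} : Finset ℤ) := by
  rw [mem_bdryPlus_iff, mem_bdryMinus_cubeAt, update_sub_single]
  simp only [Pi.sub_apply, Pi.single_eq_same, mem_insert, mem_singleton]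
  exact and_congr_right fun _ => by omega

theorem sum_sq_bdryPlus_cubeAt_le (v : LatticePt d → ℝ) :
    ∑ x ∈ bdryPlus (cubeAt d m a) i, v x ^ 2 ≤
      4 * ((2 * (m : ℝ) + 1)⁻¹ * ∑ x ∈ cubeAt d m a, v x ^ 2 +
        (2 * (m : ℝ) + 1) * ∑ x ∈ cubeAt d m a, gradPlus i v x ^ 2) := by
  rw [sum_eq_sum_sum_update i (a i) fun _ => mem_bdryPlus_cubeAt, sum_cubeAt_eq_sum_slices i,
    sum_cubeAt_eq_sum_slices i, mul_sum, mul_sum, ← sum_add_distrib, mul_sum]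
  refine sum_le_sum fun y _ => ?_
  have h := Int.sq_add_sq_le_of_subset_Icc (fun s => v (update y i s))
    (p := a i - m) (q := a i + m + 1) (W := Icc (a i - m) (a i + m))
    (Icc_subset_Icc le_rfl (by omega)) (nonempty_Icc.2 (by omega))
    (by rw [Int.card_Icc_sub_add]; omega)
  rw [Int.card_Icc_sub_add, Ico_add_one_right_eq_Icc] at h
  rw [sum_pair (by omega)]
  push_cast at h
  simpa only [gradPlus, update_add_single_self] using h

theorem sum_sq_bdryMinus_cubeAt_le (v : LatticePt d → ℝ) :
    ∑ x ∈ bdryMinus (cubeAt d m a) i, v x ^ 2 ≤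
      4 * ((2 * (m : ℝ) + 1)⁻¹ * ∑ x ∈ cubeAt d m a, v x ^ 2 +
        (2 * (m : ℝ) + 1) * ∑ x ∈ cubeAt d m a, gradMinus i v x ^ 2) := by
  rw [sum_eq_sum_sum_update i (a i) fun _ => mem_bdryMinus_cubeAt, sum_cubeAt_eq_sum_slices i,
    sum_cubeAt_eq_sum_slices i, mul_sum, mul_sum, ← sum_add_distrib, mul_sum]
  refine sum_le_sum fun y _ => ?_
  have h := Int.sq_add_sq_le_of_subset_Icc (fun s => v (update y i s))
    (p := a i - m - 1) (q := a i + m) (W := Icc (a i - m) (a i + m))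
    (Icc_subset_Icc (by omega) le_rfl) (nonempty_Icc.2 (by omega))
    (by rw [Int.card_Icc_sub_add]; omega)
  -- the shift `t = s - 1` turns forward increments on `[a i - m - 1, a i + m)` into `∇ᵢ*` on `W`
  rw [Int.card_Icc_sub_add, ← sum_Ico_add_right_sub_eq _ _ 1, sub_add_cancel,
    Ico_add_one_right_eq_Icc] at h
  rw [sum_pair (by omega)]
  push_cast at h
  simp only [gradMinus, update_sub_single_self, sub_add_cancel] at h ⊢
  rwa [sum_congr rfl fun s _ => sub_sq_comm (v (update y i s)) _] at h

theorem four_lt_three_mul_sqrt_two : (4 : ℝ) < 3 * √2 := by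
  have h : (4 / 3 : ℝ) < √2 := Real.lt_sqrt_of_sq_lt (by norm_num)
  linarith

/-- Boundary estimate for cubes in `ℤ^d`, with a universal constant `c < 3√2`. -/
theorem boundary_estimate_cubes :
    ∃ c : ℝ, c < 3 * Real.sqrt 2 ∧
      ∀ d : ℕ, 1 ≤ d → ∀ m : ℕ, 1 < m →
        ∀ (a : LatticePt d) (v : LatticePt d → ℝ) (i : Fin d),
          (∑ x ∈ bdryPlus (cubeAt d m a) i, v x ^ 2 ≤
            c * ((2 * (m : ℝ) + 1)⁻¹ * ∑ x ∈ cubeAt d m a, v x ^ 2 +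
              (2 * (m : ℝ) + 1) * ∑ x ∈ cubeAt d m a, gradPlus i v x ^ 2)) ∧
          (∑ x ∈ bdryMinus (cubeAt d m a) i, v x ^ 2 ≤
            c * ((2 * (m : ℝ) + 1)⁻¹ * ∑ x ∈ cubeAt d m a, v x ^ 2 +
              (2 * (m : ℝ) + 1) * ∑ x ∈ cubeAt d m a, gradMinus i v x ^ 2)) := by
  exact ⟨4, four_lt_three_mul_sqrt_two, fun _ _ _ _ _ v _ =>
    ⟨sum_sq_bdryPlus_cubeAt_le v, sum_sq_bdryMinus_cubeAt_le v⟩⟩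
end

section
/- Failure of Fréchet differentiability and of the inverse function theorem in C^1_*: Let H be an infinite-dimensional separable real Hilbert space. Then: (i) there exists G ∈ C^1_*(H, H) which is infinitely Fréchet differentiable on H \ {0} but is not Fréchet differentiable at 0; (ii) there exists F ∈ C^1_*(H, H) with D¹F(0, ẋ) = ẋ for all ẋ ∈ H such that F is injective on no neighbourhood of 0, i.e. for every neighbourhood W of 0 there exist distinct points x₁, x₂ ∈ W with F(x₁) = F(x₂). -/
open Filter

noncomputable section

/-- Directional derivative `D^j G(x, v^j)`: the `j`-th derivative at `t = 0` of
`t ↦ G(x + t v)`. -/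
def dirDeriv {X Y : Type*} [NormedAddCommGroup X] [NormedSpace ℝ X]
    [NormedAddCommGroup Y] [NormedSpace ℝ Y] (G : X → Y) (j : ℕ) (x v : X) : Y :=
  iteratedDeriv j (fun t : ℝ => G (x + t • v)) 0

/-- The class `C^m_*(U, Y)`. -/
def CmStar {X Y : Type*} [NormedAddCommGroup X] [NormedSpace ℝ X]
    [NormedAddCommGroup Y] [NormedSpace ℝ Y] (m : ℕ) (U : Set X) (G : X → Y) : Prop :=
  ContinuousOn G U ∧
    (∀ (x v : X) (j : ℕ), j < m → ∀ t : ℝ, x + t • v ∈ U →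
      DifferentiableAt ℝ (iteratedDeriv j fun s : ℝ => G (x + s • v)) t) ∧
    ∀ j : ℕ, j ≤ m → ContinuousOn (fun p : X × X => dirDeriv G j p.1 p.2) (U ×ˢ Set.univ)

/-!
Fix an orthonormal sequence `e n`, scales `a n = 2 ^ (-2 ^ (n + 2))` (`scale`), radii
`R n = 2 ^ n a n` (`radius`), a bump `ρ` around `1` (`profile`) and a radial cutoff `χ` (`cutoff`),
and put `Φ x = ∑ a n ρ(⟪e n, x⟫ / a n) χ(‖x‖² / R n²) • e n` (`bumpSum`). The `n`-th term lives
in the shell `a n / 2 ≤ ‖x‖ ≤ 2 R n` (`IsActive`), and these shells are pairwise disjoint. Near a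
point `x ≠ 0` only finitely many terms survive, so `Φ` is smooth off `0`. Near `0` only large `n`
occur, and the derivative of the `n`-th term in direction `v` is at most
`C (|⟪e n, v⟫| + ‖v‖ / 2 ^ n)`; since `⟪e n, v⟫ → 0` (Bessel), the directional derivative is
jointly continuous and vanishes at `0`, so `Φ ∈ C¹_*` (on lines through `0` the derivative exists
because it is continuous there). But `Φ (a n • e n) = a n • e n` with `a n • e n → 0`, so `Φ` is
not Fréchet differentiable at `0`, and `x ↦ x - Φ x` has `D¹ = id` at `0` while it maps `0` and
every `a n • e n` to `0`.
-/

open Set Metric Topology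
open scoped RealInnerProductSpace

section CmStar

variable {X Y : Type*} [NormedAddCommGroup X] [NormedSpace ℝ X]
  [NormedAddCommGroup Y] [NormedSpace ℝ Y]

theorem dirDeriv_zero (G : X → Y) (x v : X) : dirDeriv G 0 x v = G x := by
  simp [dirDeriv]

theorem dirDeriv_one_eq {G : X → Y} {x v : X} {y : Y}
    (h : HasDerivAt (fun t : ℝ => G (x + t • v)) y 0) : dirDeriv G 1 x v = y := by
  rw [dirDeriv, iteratedDeriv_one, h.deriv]

theorem cmStar_one_univ {G : X → Y} {D : X → X → Y} (hG : Continuous G)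
    (hD : Continuous fun p : X × X => D p.1 p.2)
    (hGD : ∀ x v : X, ∀ t : ℝ, HasDerivAt (fun s : ℝ => G (x + s • v)) (D (x + t • v) v) t) :
    CmStar 1 univ G := by
  have hdir : ∀ x v, dirDeriv G 1 x v = D x v := fun x v =>
    dirDeriv_one_eq (by simpa using hGD x v 0)
  refine ⟨hG.continuousOn, fun x v j hj t _ => ?_, fun j hj => ?_⟩
  · obtain rfl : j = 0 := by omega
    simpa using (hGD x v t).differentiableAt
  · interval_cases j
    · simpa only [dirDeriv_zero] using (hG.fst').continuousOn
    · simpa only [hdir] using hD.continuousOn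

theorem hasDerivAt_line_of_forall_ne {G : X → Y} {D : X → X → Y} {x₀ : X}
    (hG : ContinuousAt G x₀) (hD : ∀ v, ContinuousAt (D · v) x₀) (hD₀ : D x₀ 0 = 0)
    (hGD : ∀ x v : X, ∀ t : ℝ, x + t • v ≠ x₀ →
      HasDerivAt (fun s : ℝ => G (x + s • v)) (D (x + t • v) v) t)
    (x v : X) (t : ℝ) : HasDerivAt (fun s : ℝ => G (x + s • v)) (D (x + t • v) v) t := by
  by_cases hx : x + t • v = x₀
  · rcases eq_or_ne v 0 with rfl | hv
    · simp only [smul_zero, add_zero] at hx ⊢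
      rw [hx, hD₀]
      exact hasDerivAt_const t (G x₀)
    have hline : Continuous fun s : ℝ => x + s • v := by fun_prop
    refine hasDerivAt_of_hasDerivAt_of_ne (fun s hs => hGD x v s fun h => hs ?_) ?_ ?_
    · have : (s - t) • v = 0 := by
        rw [sub_smul, ← add_sub_add_left_eq_sub _ _ x, h, hx, sub_self]
      exact sub_eq_zero.1 ((smul_eq_zero.1 this).resolve_right hv)
    · exact ContinuousAt.comp (g := G) (hx ▸ hG) hline.continuousAt
    · exact ContinuousAt.comp (g := (D · v)) (hx ▸ hD v) hline.continuousAt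
  · exact hGD x v t hx

end CmStar

def scale (n : ℕ) : ℝ := (2 ^ 2 ^ (n + 2))⁻¹

def radius (n : ℕ) : ℝ := 2 ^ n * scale n

theorem scale_pos (n : ℕ) : 0 < scale n := by unfold scale; positivity

theorem radius_pos (n : ℕ) : 0 < radius n := by unfold radius; have := scale_pos n; positivity

theorem scale_le_radius (n : ℕ) : scale n ≤ radius n :=
  le_mul_of_one_le_left (scale_pos n).le (one_le_pow₀ one_le_two)

theorem scale_div_radius (n : ℕ) : scale n / radius n = (2 ^ n)⁻¹ := by
  rw [radius, div_mul_eq_div_div_swap, div_self (scale_pos n).ne', one_div]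

theorem strictAnti_scale : StrictAnti scale := fun n m h => by
  unfold scale
  gcongr <;> exact one_lt_two

theorem four_mul_radius_lt_scale {n m : ℕ} (h : n < m) : 4 * radius m < scale n := by
  have hexp : m + 2 + 2 ^ (n + 2) < 2 ^ (m + 2) := by
    have h1 : 2 ^ (n + 2) ≤ 2 ^ (m + 1) := Nat.pow_le_pow_right two_pos (by omega)
    have h2 : m + 2 < 2 ^ (m + 1) := by
      have := Nat.lt_two_pow_self (n := m)
      rw [pow_succ]; omega
    have h3 : 2 ^ (m + 2) = 2 * 2 ^ (m + 1) := by ring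
    omega
  have key : 4 * 2 ^ m * 2 ^ 2 ^ (n + 2) < (2 : ℝ) ^ 2 ^ (m + 2) :=
    calc 4 * 2 ^ m * 2 ^ 2 ^ (n + 2) = (2 : ℝ) ^ (m + 2 + 2 ^ (n + 2)) := by ring
      _ < 2 ^ 2 ^ (m + 2) := pow_lt_pow_right₀ one_lt_two hexp
  unfold radius scale
  field_simp
  linarith

theorem tendsto_scale : Tendsto scale atTop (𝓝 0) :=
  tendsto_inv_atTop_zero.comp <| (tendsto_pow_atTop_atTop_of_one_lt one_lt_two).comp <|
    (tendsto_pow_atTop_atTop_of_one_lt one_lt_two).comp (tendsto_add_atTop_nat 2)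

theorem tendsto_radius : Tendsto radius atTop (𝓝 0) := by
  refine (tendsto_add_atTop_iff_nat 1).1 (squeeze_zero (fun n => (radius_pos _).le) (fun n => ?_)
    (by simpa using tendsto_scale.div_const 4))
  linarith [four_mul_radius_lt_scale n.lt_succ_self]

theorem ContDiffBump.exists_abs_deriv_le {c : ℝ} (f : ContDiffBump c) :
    ∃ C, ∀ y, |deriv f y| ≤ C := by
  simpa using ((f.contDiff (n := 1)).continuous_deriv le_rfl).bounded_above_of_compact_support
    f.hasCompactSupport.deriv

theorem ContDiffBump.dist_lt_of_ne_zero {c y : ℝ} (f : ContDiffBump c) (h : f y ≠ 0) :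
    dist y c < f.rOut := by
  rwa [← mem_ball, ← f.support_eq]

theorem ContDiffBump.dist_le_of_deriv_ne_zero {c y : ℝ} (f : ContDiffBump c) (h : deriv f y ≠ 0) :
    dist y c ≤ f.rOut := by
  rw [← mem_closedBall, ← f.tsupport_eq]
  exact support_deriv_subset h

def profile : ContDiffBump (1 : ℝ) := ⟨1 / 4, 1 / 2, by norm_num, by norm_num⟩

def cutoff : ContDiffBump (0 : ℝ) := ⟨1, 2, one_pos, one_lt_two⟩

theorem profile_one : profile 1 = 1 :=
  profile.one_of_mem_closedBall (by simp [profile])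

theorem half_lt_of_profile_ne_zero {y : ℝ} (h : profile y ≠ 0) : 1 / 2 < y := by
  have := profile.dist_lt_of_ne_zero h
  rw [Real.dist_eq, abs_lt] at this
  simp only [profile] at this
  linarith

theorem half_le_of_deriv_profile_ne_zero {y : ℝ} (h : deriv profile y ≠ 0) : 1 / 2 ≤ y := by
  have := profile.dist_le_of_deriv_ne_zero h
  rw [Real.dist_eq, abs_le] at this
  simp only [profile] at this
  linarith

theorem profile_zero : profile 0 = 0 := by
  by_contra h
  linarith [half_lt_of_profile_ne_zero h]

theorem deriv_profile_zero : deriv profile 0 = 0 := by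
  by_contra h
  linarith [half_le_of_deriv_profile_ne_zero h]

theorem profile_le_two_mul_abs (y : ℝ) : profile y ≤ 2 * |y| := by
  by_cases h : profile y = 0
  · rw [h]; positivity
  · linarith [half_lt_of_profile_ne_zero h, le_abs_self y, profile.le_one (x := y)]

theorem cutoff_eq_one {q : ℝ} (h : |q| ≤ 1) : cutoff q = 1 :=
  cutoff.one_of_mem_closedBall (by simpa [cutoff] using h)

theorem le_two_of_cutoff_ne_zero {q : ℝ} (h : cutoff q ≠ 0) : q ≤ 2 := by
  have := cutoff.dist_lt_of_ne_zero h
  rw [Real.dist_eq, sub_zero] at this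
  exact (le_abs_self q).trans this.le

theorem le_two_of_deriv_cutoff_ne_zero {q : ℝ} (h : deriv cutoff q ≠ 0) : q ≤ 2 := by
  have := cutoff.dist_le_of_deriv_ne_zero h
  rw [Real.dist_eq, sub_zero] at this
  exact (le_abs_self q).trans this

theorem norm_le_two_mul_radius {E : Type*} [SeminormedAddCommGroup E] {n : ℕ} {x : E}
    (h : ‖x‖ ^ 2 / radius n ^ 2 ≤ 2) : ‖x‖ ≤ 2 * radius n := by
  have hR := radius_pos n
  rw [div_le_iff₀ (by positivity)] at h
  exact (pow_le_pow_iff_left₀ (norm_nonneg x) (by positivity) two_ne_zero).1 (by nlinarith)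

section BumpTerm

variable {H : Type*} [NormedAddCommGroup H] [InnerProductSpace ℝ H] (e : ℕ → H) (n : ℕ)

def bumpTerm (x : H) : ℝ :=
  scale n * profile (⟪e n, x⟫ / scale n) * cutoff (‖x‖ ^ 2 / radius n ^ 2)

def bumpTermDeriv (x v : H) : ℝ :=
  scale n * (deriv profile (⟪e n, x⟫ / scale n) * (⟪e n, v⟫ / scale n)) *
      cutoff (‖x‖ ^ 2 / radius n ^ 2) +
    scale n * profile (⟪e n, x⟫ / scale n) *
      (deriv cutoff (‖x‖ ^ 2 / radius n ^ 2) * (2 * ⟪x, v⟫ / radius n ^ 2))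

theorem hasDerivAt_bumpTerm_line (x v : H) (t : ℝ) :
    HasDerivAt (fun s : ℝ => bumpTerm e n (x + s • v)) (bumpTermDeriv e n (x + t • v) v) t := by
  have hline : HasDerivAt (fun s : ℝ => x + s • v) v t := by
    simpa using ((hasDerivAt_id t).smul_const v).const_add x
  have hinner : HasDerivAt (fun s : ℝ => ⟪e n, x + s • v⟫) ⟪e n, v⟫ t := by
    simpa using (hasDerivAt_const t (e n)).inner ℝ hline
  have hprofile := (profile.contDiff (n := 1)).differentiable one_ne_zero _ |>.hasDerivAt.comp t
    (hinner.div_const (scale n))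
  have hcutoff := (cutoff.contDiff (n := 1)).differentiable one_ne_zero _ |>.hasDerivAt.comp t
    (hline.norm_sq.div_const (radius n ^ 2))
  exact (hprofile.const_mul (scale n)).mul hcutoff

theorem contDiff_bumpTerm : ContDiff ℝ (⊤ : ℕ∞) (bumpTerm e n) := by
  unfold bumpTerm
  have := profile.contDiff (n := (⊤ : ℕ∞))
  have := cutoff.contDiff (n := (⊤ : ℕ∞))
  have : ContDiff ℝ (⊤ : ℕ∞) fun x : H => ⟪e n, x⟫ := contDiff_const.inner ℝ contDiff_id
  have : ContDiff ℝ (⊤ : ℕ∞) fun x : H => ‖x‖ ^ 2 := contDiff_norm_sq ℝ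
  fun_prop

theorem continuous_bumpTermDeriv : Continuous fun p : H × H => bumpTermDeriv e n p.1 p.2 := by
  unfold bumpTermDeriv
  have := (profile.contDiff (n := 1)).continuous_deriv le_rfl
  have := (cutoff.contDiff (n := 1)).continuous_deriv le_rfl
  have := profile.continuous
  have := cutoff.continuous
  fun_prop

def IsActive (x : H) : Prop := scale n ≤ 2 * ⟪e n, x⟫ ∧ ‖x‖ ≤ 2 * radius n

variable {e n}

theorem mul_eq_zero_of_not_isActive {f g : ℝ → ℝ} (hf : ∀ y, f y ≠ 0 → 1 / 2 ≤ y)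
    (hg : ∀ q, g q ≠ 0 → q ≤ 2) {x : H} (hx : ¬IsActive e n x) :
    f (⟪e n, x⟫ / scale n) * g (‖x‖ ^ 2 / radius n ^ 2) = 0 := by
  by_contra hfg
  have hy := hf _ (left_ne_zero_of_mul hfg)
  rw [le_div_iff₀ (scale_pos n)] at hy
  exact hx ⟨by linarith, norm_le_two_mul_radius (hg _ (right_ne_zero_of_mul hfg))⟩

theorem bumpTerm_eq_zero_of_not_isActive {x : H} (hx : ¬IsActive e n x) : bumpTerm e n x = 0 := by
  have := mul_eq_zero_of_not_isActive (fun y hy => (half_lt_of_profile_ne_zero hy).le)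
    (fun q => le_two_of_cutoff_ne_zero) hx
  rw [bumpTerm, mul_assoc, this, mul_zero]

theorem bumpTermDeriv_eq_zero_of_not_isActive {x : H} (hx : ¬IsActive e n x) (v : H) :
    bumpTermDeriv e n x v = 0 := by
  have h₁ := mul_eq_zero_of_not_isActive (fun y => half_le_of_deriv_profile_ne_zero)
    (fun q => le_two_of_cutoff_ne_zero) hx
  have h₂ := mul_eq_zero_of_not_isActive (fun y hy => (half_lt_of_profile_ne_zero hy).le)
    (fun q => le_two_of_deriv_cutoff_ne_zero) hx
  rw [bumpTermDeriv]
  linear_combination (scale n * (⟪e n, v⟫ / scale n)) * h₁ +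
    (scale n * (2 * ⟪x, v⟫ / radius n ^ 2)) * h₂

theorem abs_bumpTerm_le (x : H) : |bumpTerm e n x| ≤ 2 * |⟪e n, x⟫| := by
  have ha := scale_pos n
  rw [bumpTerm, abs_mul, abs_mul, abs_of_pos ha, abs_of_nonneg profile.nonneg,
    abs_of_nonneg cutoff.nonneg]
  calc scale n * profile (⟪e n, x⟫ / scale n) * cutoff (‖x‖ ^ 2 / radius n ^ 2)
      ≤ scale n * (2 * |⟪e n, x⟫ / scale n|) * 1 := by
        gcongr
        exacts [cutoff.nonneg, profile_le_two_mul_abs _, cutoff.le_one]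
    _ = 2 * |⟪e n, x⟫| := by rw [abs_div, abs_of_pos ha]; field_simp

theorem abs_bumpTermDeriv_le {Kρ Kχ : ℝ} (hKρ : ∀ y, |deriv profile y| ≤ Kρ)
    (hKχ : ∀ q, |deriv cutoff q| ≤ Kχ) (x v : H) :
    |bumpTermDeriv e n x v| ≤ (Kρ + 4 * Kχ) * (|⟪e n, v⟫| + ‖v‖ / 2 ^ n) := by
  have ha := scale_pos n
  have hR := radius_pos n
  have hKχ0 : 0 ≤ Kχ := (abs_nonneg _).trans (hKχ 0)
  set q := ‖x‖ ^ 2 / radius n ^ 2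
  have h₁ : |scale n * (deriv profile (⟪e n, x⟫ / scale n) * (⟪e n, v⟫ / scale n)) * cutoff q|
      ≤ Kρ * |⟪e n, v⟫| := by
    rw [mul_left_comm, mul_div_cancel₀ _ ha.ne', abs_mul, abs_mul, abs_of_nonneg cutoff.nonneg]
    calc |deriv profile (⟪e n, x⟫ / scale n)| * |⟪e n, v⟫| * cutoff q ≤ Kρ * |⟪e n, v⟫| * 1 := by
          gcongr
          exacts [cutoff.nonneg, mul_nonneg ((abs_nonneg _).trans (hKρ 0)) (abs_nonneg _), hKρ _,
            cutoff.le_one]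
      _ = Kρ * |⟪e n, v⟫| := mul_one _
  have h₂ : |scale n * profile (⟪e n, x⟫ / scale n) *
      (deriv cutoff q * (2 * ⟪x, v⟫ / radius n ^ 2))| ≤ 4 * Kχ * (‖v‖ / 2 ^ n) := by
    rcases eq_or_ne (deriv cutoff q) 0 with hq | hq
    · rw [hq, zero_mul, mul_zero, abs_zero]; positivity
    have hxv : |⟪x, v⟫| ≤ 2 * radius n * ‖v‖ := (abs_real_inner_le_norm x v).trans
      (by gcongr; exact norm_le_two_mul_radius (le_two_of_deriv_cutoff_ne_zero hq))
    calc _ = scale n * profile (⟪e n, x⟫ / scale n) * |deriv cutoff q| *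
          (2 * |⟪x, v⟫| / radius n ^ 2) := by
          simp only [abs_mul, abs_div, abs_of_pos ha, abs_of_nonneg profile.nonneg, abs_two,
            abs_of_pos (pow_pos hR 2), mul_assoc]
      _ ≤ scale n * 1 * Kχ * (2 * (2 * radius n * ‖v‖) / radius n ^ 2) := by
          gcongr
          exacts [profile.le_one, hKχ _]
      _ = 4 * Kχ * ‖v‖ * (scale n / radius n) := by field_simp; ring
      _ = 4 * Kχ * (‖v‖ / 2 ^ n) := by rw [scale_div_radius]; ring
  calc |bumpTermDeriv e n x v| ≤ _ := abs_add_le _ _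
    _ ≤ Kρ * |⟪e n, v⟫| + 4 * Kχ * (‖v‖ / 2 ^ n) := add_le_add h₁ h₂
    _ ≤ _ := by
      have hKρ0 : 0 ≤ Kρ := (abs_nonneg _).trans (hKρ 0)
      have : 0 ≤ ‖v‖ / 2 ^ n := by positivity
      nlinarith [abs_nonneg ⟪e n, v⟫]

end BumpTerm

theorem Orthonormal.tendsto_inner_atTop {H : Type*} [NormedAddCommGroup H] [InnerProductSpace ℝ H]
    {e : ℕ → H} (he : Orthonormal ℝ e) (y : H) : Tendsto (fun n => ⟪e n, y⟫) atTop (𝓝 0) := by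
  have h := (he.inner_products_summable y).tendsto_atTop_zero
  have := h.sqrt
  simp only [Real.sqrt_sq (norm_nonneg _), Real.sqrt_zero] at this
  exact tendsto_zero_iff_norm_tendsto_zero.2 this

section BumpSum

variable {H : Type*} [NormedAddCommGroup H] [InnerProductSpace ℝ H] {e : ℕ → H}

def bumpSum (e : ℕ → H) (x : H) : H := ∑' n, bumpTerm e n x • e n

def bumpSumDeriv (e : ℕ → H) (x v : H) : H := ∑' n, bumpTermDeriv e n x v • e n

theorem IsActive.scale_le (he : Orthonormal ℝ e) {n : ℕ} {x : H} (h : IsActive e n x) :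
    scale n ≤ 2 * ‖x‖ := by
  have := real_inner_le_norm (e n) x
  rw [he.1 n, one_mul] at this
  linarith [h.1]

theorem IsActive.unique (he : Orthonormal ℝ e) {n m : ℕ} {x : H} (hn : IsActive e n x)
    (hm : IsActive e m x) : n = m := by
  by_contra hne
  rcases Nat.lt_or_gt_of_ne hne with h | h
  · linarith [hn.scale_le he, hm.2, four_mul_radius_lt_scale h]
  · linarith [hm.scale_le he, hn.2, four_mul_radius_lt_scale h]

theorem exists_tsum_smul_eq_single (he : Orthonormal ℝ e) {x : H} {c : ℕ → ℝ}
    (hc : ∀ n, ¬IsActive e n x → c n = 0) : ∃ n, ∑' k, c k • e k = c n • e n := by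
  by_cases h : ∃ n, IsActive e n x
  · obtain ⟨n, hn⟩ := h
    refine ⟨n, tsum_eq_single n fun m hm => ?_⟩
    rw [hc m fun hm' => hm (hm'.unique he hn), zero_smul]
  · push Not at h
    exact ⟨0, by simp [hc _ (h _)]⟩

theorem tsum_smul_eq_sum_range {x : H} {c : ℕ → ℝ} (hc : ∀ n, ¬IsActive e n x → c n = 0)
    {N : ℕ} (hN : ∀ n, IsActive e n x → n < N) :
    ∑' k, c k • e k = ∑ k ∈ Finset.range N, c k • e k :=
  tsum_eq_sum fun n hn => by
    rw [hc n fun h => hn (Finset.mem_range.2 (hN n h)), zero_smul]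

theorem exists_eventually_isActive_imp_lt {x₀ : H} (hx₀ : x₀ ≠ 0) :
    ∃ N, ∀ᶠ x in 𝓝 x₀, ∀ n, IsActive e n x → n < N := by
  have hpos : 0 < ‖x₀‖ / 4 := by positivity
  obtain ⟨N, hN⟩ := eventually_atTop.1 (tendsto_radius.eventually (gt_mem_nhds hpos))
  refine ⟨N, ?_⟩
  filter_upwards [(continuous_norm.tendsto x₀).eventually (lt_mem_nhds (half_lt_self
    (norm_pos_iff.2 hx₀)))] with x hx n hn
  by_contra hle
  linarith [hN n (not_lt.1 hle), hn.2]

theorem eventually_isActive_imp_le (he : Orthonormal ℝ e) (N : ℕ) :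
    ∀ᶠ x in 𝓝 (0 : H), ∀ n, IsActive e n x → N ≤ n := by
  have hpos := half_pos (scale_pos N)
  filter_upwards [(continuous_norm.tendsto (0 : H)).eventually
    (gt_mem_nhds (show ‖(0 : H)‖ < scale N / 2 by rwa [norm_zero]))] with x hx n hn
  by_contra hlt
  linarith [strictAnti_scale (not_le.1 hlt), hn.scale_le he]

theorem bumpSum_zero : bumpSum e 0 = 0 := by
  simp [bumpSum, bumpTerm, profile_zero]

theorem norm_bumpSum_le (he : Orthonormal ℝ e) (x : H) : ‖bumpSum e x‖ ≤ 2 * ‖x‖ := by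
  obtain ⟨n, hn⟩ := exists_tsum_smul_eq_single he fun n => bumpTerm_eq_zero_of_not_isActive
  rw [bumpSum, hn, norm_smul, he.1 n, mul_one, Real.norm_eq_abs]
  exact (abs_bumpTerm_le x).trans (by gcongr; simpa [he.1 n] using abs_real_inner_le_norm (e n) x)

theorem bumpSumDeriv_zero_left (v : H) : bumpSumDeriv e 0 v = 0 := by
  simp [bumpSumDeriv, bumpTermDeriv, profile_zero, deriv_profile_zero]

theorem exists_eventually_eq_sum_range {x₀ : H} (hx₀ : x₀ ≠ 0) :
    ∃ N, ∀ᶠ x in 𝓝 x₀, bumpSum e x = ∑ n ∈ Finset.range N, bumpTerm e n x • e n ∧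
      ∀ v, bumpSumDeriv e x v = ∑ n ∈ Finset.range N, bumpTermDeriv e n x v • e n := by
  obtain ⟨N, hN⟩ := exists_eventually_isActive_imp_lt (e := e) hx₀
  refine ⟨N, hN.mono fun x hx => ⟨?_, fun v => ?_⟩⟩
  · exact tsum_smul_eq_sum_range (fun n => bumpTerm_eq_zero_of_not_isActive) hx
  · exact tsum_smul_eq_sum_range (fun n h => bumpTermDeriv_eq_zero_of_not_isActive h v) hx

theorem contDiffOn_bumpSum : ContDiffOn ℝ (⊤ : ℕ∞) (bumpSum e) {0}ᶜ := fun x₀ hx₀ => by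
  obtain ⟨N, hN⟩ := exists_eventually_eq_sum_range (e := e) hx₀
  have hsum : ContDiff ℝ (⊤ : ℕ∞) fun x => ∑ n ∈ Finset.range N, bumpTerm e n x • e n :=
    ContDiff.sum fun n _ => (contDiff_bumpTerm e n).smul contDiff_const
  exact (hsum.contDiffAt.congr_of_eventuallyEq (hN.mono fun x hx => hx.1)).contDiffWithinAt

theorem continuous_bumpSum (he : Orthonormal ℝ e) : Continuous (bumpSum e) := by
  refine continuous_iff_continuousAt.2 fun x₀ => ?_
  rcases eq_or_ne x₀ 0 with rfl | hx₀
  · rw [ContinuousAt, bumpSum_zero]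
    refine squeeze_zero_norm (norm_bumpSum_le he) ?_
    simpa using (continuous_norm.tendsto (0 : H)).const_mul 2
  · exact (contDiffOn_bumpSum.continuousOn.continuousAt (isOpen_compl_singleton.mem_nhds hx₀))

theorem hasDerivAt_bumpSum_line_of_ne {x v : H} {t : ℝ} (hx : x + t • v ≠ 0) :
    HasDerivAt (fun s : ℝ => bumpSum e (x + s • v)) (bumpSumDeriv e (x + t • v) v) t := by
  obtain ⟨N, hN⟩ := exists_eventually_eq_sum_range (e := e) hx
  have hline : Continuous fun s : ℝ => x + s • v := by fun_prop
  rw [(hN.self_of_nhds).2 v]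
  refine HasDerivAt.congr_of_eventuallyEq ?_
    ((hline.continuousAt.eventually hN).mono fun s hs => hs.1)
  exact HasDerivAt.fun_sum fun n _ => (hasDerivAt_bumpTerm_line e n x v t).smul_const (e n)

theorem abs_inner_add_norm_div_le (he : Orthonormal ℝ e) (n : ℕ) (v v₀ : H) :
    |⟪e n, v⟫| + ‖v‖ / 2 ^ n ≤ |⟪e n, v₀⟫| + ‖v₀‖ / 2 ^ n + 2 * ‖v - v₀‖ := by
  have hinner : |⟪e n, v⟫| ≤ |⟪e n, v₀⟫| + ‖v - v₀‖ :=
    calc |⟪e n, v⟫| = |⟪e n, v₀⟫ + ⟪e n, v - v₀⟫| := by rw [← inner_add_right, add_sub_cancel]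
      _ ≤ _ := (abs_add_le _ _).trans
        (by gcongr; simpa [he.1 n] using abs_real_inner_le_norm (e n) (v - v₀))
  have hnorm : ‖v‖ / 2 ^ n ≤ ‖v₀‖ / 2 ^ n + ‖v - v₀‖ :=
    calc ‖v‖ / 2 ^ n ≤ ‖v₀‖ / 2 ^ n + ‖v - v₀‖ / 2 ^ n := by
          rw [← add_div]; gcongr; exact norm_le_norm_add_norm_sub' v v₀
      _ ≤ _ := by gcongr; exact div_le_self (norm_nonneg _) (one_le_pow₀ one_le_two)
  linarith

theorem tendsto_bumpSumDeriv_zero (he : Orthonormal ℝ e) (v₀ : H) :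
    Tendsto (fun p : H × H => bumpSumDeriv e p.1 p.2) (𝓝 (0, v₀)) (𝓝 0) := by
  obtain ⟨Kρ, hKρ⟩ := profile.exists_abs_deriv_le
  obtain ⟨Kχ, hKχ⟩ := cutoff.exists_abs_deriv_le
  set C := Kρ + 4 * Kχ
  have hC : 0 ≤ C := by linarith [(abs_nonneg _).trans (hKρ 0), (abs_nonneg _).trans (hKχ 0)]
  have hβ : Tendsto (fun n : ℕ => C * (|⟪e n, v₀⟫| + ‖v₀‖ / 2 ^ n)) atTop (𝓝 0) := by
    simpa using ((he.tendsto_inner_atTop v₀).abs.add (tendsto_const_nhds.div_atTop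
      (tendsto_pow_atTop_atTop_of_one_lt one_lt_two))).const_mul C
  rw [Metric.tendsto_nhds]
  intro ε hε
  obtain ⟨N, hN⟩ := eventually_atTop.1 (hβ.eventually (gt_mem_nhds (half_pos hε)))
  have hv : ∀ᶠ p : H × H in 𝓝 (0, v₀), 2 * C * ‖p.2 - v₀‖ < ε / 2 := by
    have : Continuous fun p : H × H => 2 * C * ‖p.2 - v₀‖ := by fun_prop
    exact (this.tendsto _).eventually (gt_mem_nhds (by simpa using half_pos hε))
  filter_upwards [hv, continuous_fst.continuousAt.eventually (eventually_isActive_imp_le he N)]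
    with ⟨x, v⟩ hv hx
  obtain ⟨n, hn⟩ := exists_tsum_smul_eq_single he
    fun n h => bumpTermDeriv_eq_zero_of_not_isActive (e := e) (n := n) h v
  rw [dist_zero_right, bumpSumDeriv, hn, norm_smul, he.1 n, mul_one, Real.norm_eq_abs]
  by_cases hact : IsActive e n x
  · calc |bumpTermDeriv e n x v| ≤ C * (|⟪e n, v⟫| + ‖v‖ / 2 ^ n) :=
          abs_bumpTermDeriv_le hKρ hKχ x v
      _ ≤ C * (|⟪e n, v₀⟫| + ‖v₀‖ / 2 ^ n + 2 * ‖v - v₀‖) :=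
          mul_le_mul_of_nonneg_left (abs_inner_add_norm_div_le he n v v₀) hC
      _ = C * (|⟪e n, v₀⟫| + ‖v₀‖ / 2 ^ n) + 2 * C * ‖v - v₀‖ := by ring
      _ < ε / 2 + ε / 2 := add_lt_add (hN n (hx n hact)) hv
      _ = ε := add_halves ε
  · rwa [bumpTermDeriv_eq_zero_of_not_isActive hact, abs_zero]

theorem continuous_bumpSumDeriv (he : Orthonormal ℝ e) :
    Continuous fun p : H × H => bumpSumDeriv e p.1 p.2 := by
  refine continuous_iff_continuousAt.2 fun ⟨x₀, v₀⟩ => ?_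
  rcases eq_or_ne x₀ 0 with rfl | hx₀
  · rw [ContinuousAt, bumpSumDeriv_zero_left]
    exact tendsto_bumpSumDeriv_zero he v₀
  · obtain ⟨N, hN⟩ := exists_eventually_eq_sum_range (e := e) hx₀
    have hsum : Continuous fun p : H × H => ∑ n ∈ Finset.range N, bumpTermDeriv e n p.1 p.2 • e n :=
      continuous_finsetSum _ fun n _ => (continuous_bumpTermDeriv e n).smul continuous_const
    exact hsum.continuousAt.congr
      ((continuous_fst.continuousAt.eventually hN).mono fun p hp => (hp.2 p.2).symm)

theorem hasDerivAt_bumpSum_line (he : Orthonormal ℝ e) (x v : H) (t : ℝ) :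
    HasDerivAt (fun s : ℝ => bumpSum e (x + s • v)) (bumpSumDeriv e (x + t • v) v) t :=
  hasDerivAt_line_of_forall_ne (continuous_bumpSum he).continuousAt
    (fun v => (continuous_bumpSumDeriv he).continuousAt.comp
      (Continuous.prodMk_left v).continuousAt)
    (bumpSumDeriv_zero_left 0) (fun _ _ _ => hasDerivAt_bumpSum_line_of_ne) x v t

theorem cmStar_bumpSum (he : Orthonormal ℝ e) : CmStar 1 univ (bumpSum e) :=
  cmStar_one_univ (continuous_bumpSum he) (continuous_bumpSumDeriv he) (hasDerivAt_bumpSum_line he)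

theorem bumpSum_scale_smul (he : Orthonormal ℝ e) (n : ℕ) :
    bumpSum e (scale n • e n) = scale n • e n := by
  have ha := scale_pos n
  have hterm : bumpTerm e n (scale n • e n) = scale n := by
    have hR := radius_pos n
    have hq : |‖scale n • e n‖ ^ 2 / radius n ^ 2| ≤ 1 := by
      rw [norm_smul, he.1 n, mul_one, Real.norm_eq_abs, abs_of_pos ha,
        abs_of_nonneg (by positivity), div_le_one (by positivity)]
      exact pow_le_pow_left₀ ha.le (scale_le_radius n) 2
    rw [bumpTerm, inner_smul_right, real_inner_self_eq_norm_sq, he.1 n, one_pow, mul_one,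
      div_self ha.ne', profile_one, cutoff_eq_one hq, mul_one, mul_one]
  rw [bumpSum, tsum_eq_single n fun m hm => ?_, hterm]
  rw [bumpTerm, inner_smul_right, he.2 hm, mul_zero, zero_div, profile_zero, mul_zero, zero_mul,
    zero_smul]

theorem tendsto_scale_smul (he : Orthonormal ℝ e) :
    Tendsto (fun n => scale n • e n) atTop (𝓝 0) := by
  refine tendsto_zero_iff_norm_tendsto_zero.2 ?_
  simpa [norm_smul, he.1 _, abs_of_pos (scale_pos _)] using tendsto_scale

theorem not_differentiableAt_bumpSum (he : Orthonormal ℝ e) :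
    ¬DifferentiableAt ℝ (bumpSum e) 0 := by
  intro h
  have hzero : fderiv ℝ (bumpSum e) 0 = 0 := by
    ext v
    have hline : HasDerivAt (fun s : ℝ => s • v) v 0 := by
      simpa using (hasDerivAt_id (0 : ℝ)).smul_const v
    have hΦ : HasDerivAt (fun s : ℝ => bumpSum e (s • v)) 0 0 := by
      simpa [bumpSumDeriv_zero_left] using hasDerivAt_bumpSum_line he 0 v 0
    exact (h.hasFDerivAt.comp_hasDerivAt_of_eq (0 : ℝ) hline (zero_smul ℝ v).symm).unique hΦ
  have ho := h.hasFDerivAt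
  rw [hzero, hasFDerivAt_iff_isLittleO_nhds_zero] at ho
  obtain ⟨n, hn⟩ := ((tendsto_scale_smul he).eventually (ho.def one_half_pos)).exists
  simp only [zero_add, bumpSum_zero, sub_zero, zero_apply, bumpSum_scale_smul he] at hn
  have : 0 < ‖scale n • e n‖ := by simp [norm_smul, he.1 n, (scale_pos n).ne']
  linarith

theorem hasDerivAt_id_sub_bumpSum_line (he : Orthonormal ℝ e) (x v : H) (t : ℝ) :
    HasDerivAt (fun s : ℝ => x + s • v - bumpSum e (x + s • v))
      (v - bumpSumDeriv e (x + t • v) v) t := by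
  have hline : HasDerivAt (fun s : ℝ => x + s • v) v t := by
    simpa using ((hasDerivAt_id t).smul_const v).const_add x
  exact hline.sub (hasDerivAt_bumpSum_line he x v t)

theorem cmStar_id_sub_bumpSum (he : Orthonormal ℝ e) :
    CmStar 1 univ fun x => x - bumpSum e x :=
  cmStar_one_univ (D := fun x v => v - bumpSumDeriv e x v)
    (continuous_id.sub (continuous_bumpSum he)) (continuous_snd.sub (continuous_bumpSumDeriv he)) (hasDerivAt_id_sub_bumpSum_line he)

theorem dirDeriv_id_sub_bumpSum_zero (he : Orthonormal ℝ e) (v : H) :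
    dirDeriv (fun x => x - bumpSum e x) 1 0 v = v := by
  rw [dirDeriv_one_eq (by simpa using hasDerivAt_id_sub_bumpSum_line he 0 v 0),
    bumpSumDeriv_zero_left, sub_zero]

end BumpSum

theorem exists_orthonormal_nat {H : Type*} [NormedAddCommGroup H] [InnerProductSpace ℝ H]
    (hinf : ¬FiniteDimensional ℝ H) : ∃ e : ℕ → H, Orthonormal ℝ e := by
  let b := Module.Basis.ofVectorSpace ℝ H
  have : Infinite (Module.Basis.ofVectorSpaceIndex ℝ H) := by
    by_contra h
    rw [not_infinite_iff_finite] at h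
    exact hinf (Module.Finite.of_basis b)
  exact ⟨_, InnerProductSpace.gramSchmidtNormed_orthonormal
    (b.linearIndependent.comp _ (Infinite.natEmbedding _).injective)⟩

theorem cmstar_frechet_failure_general {H : Type*} [NormedAddCommGroup H] [InnerProductSpace ℝ H]
    (hinf : ¬FiniteDimensional ℝ H) :
    (∃ G : H → H, CmStar 1 Set.univ G ∧ ContDiffOn ℝ (⊤ : ℕ∞) G {(0 : H)}ᶜ ∧
      ¬DifferentiableAt ℝ G 0) ∧
    ∃ F : H → H, CmStar 1 Set.univ F ∧ (∀ xdot : H, dirDeriv F 1 0 xdot = xdot) ∧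
      ∀ W ∈ nhds (0 : H), ∃ x₁ ∈ W, ∃ x₂ ∈ W, x₁ ≠ x₂ ∧ F x₁ = F x₂ := by
  obtain ⟨e, he⟩ := exists_orthonormal_nat hinf
  refine ⟨⟨bumpSum e, cmStar_bumpSum he, contDiffOn_bumpSum, not_differentiableAt_bumpSum he⟩,
    fun x => x - bumpSum e x, cmStar_id_sub_bumpSum he, dirDeriv_id_sub_bumpSum_zero he,
    fun W hW => ?_⟩
  obtain ⟨n, hn⟩ := ((tendsto_scale_smul he).eventually hW).exists
  refine ⟨scale n • e n, hn, 0, mem_of_mem_nhds hW, ?_, ?_⟩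
  · simp [he.ne_zero n, (scale_pos n).ne']
  · simp [bumpSum_scale_smul he, bumpSum_zero]

/-- On an infinite-dimensional separable real Hilbert space:
(i) there is a `C^1_*` map, smooth away from the origin, which is not Fréchet
differentiable at `0`; (ii) there is a `C^1_*` map whose directional derivative at `0` is
the identity but which is injective on no neighbourhood of `0` (failure of the inverse
function theorem in `C^1_*`). -/
theorem cmstar_frechet_failure {H : Type*} [NormedAddCommGroup H] [InnerProductSpace ℝ H]
    [CompleteSpace H] [TopologicalSpace.SeparableSpace H]
    (hinf : ¬FiniteDimensional ℝ H) :
    (∃ G : H → H, CmStar 1 Set.univ G ∧ ContDiffOn ℝ (⊤ : ℕ∞) G {(0 : H)}ᶜ ∧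
      ¬DifferentiableAt ℝ G 0) ∧
    ∃ F : H → H, CmStar 1 Set.univ F ∧ (∀ xdot : H, dirDeriv F 1 0 xdot = xdot) ∧
      ∀ W ∈ nhds (0 : H), ∃ x₁ ∈ W, ∃ x₂ ∈ W, x₁ ≠ x₂ ∧ F x₁ = F x₂ :=
  cmstar_frechet_failure_general hinf

end
end
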